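/- arXiv:2306.15835 — 7 statements merged into one kernel-verified Lean document; each statement's English description precedes it below -/
import Mathlib

section
/- Let X be a measurable space and k : X × X → ℝ a bounded measurable kernel. Let P and Q be probability measures on X and let n, m ≥ 2. Then the unbiased empirical squared MMD estimator is unbiased: the expectation, with respect to the product measure P^{⊗n} ⊗ Q^{⊗m} on Xⁿ × X^m over i.i.d. samples (x₁,…,xₙ, y₁,…,y_m), of (1/(n(n−1))) Σ_{i≠j} k(x_i, x_j) − (2/(mn)) Σ_{i=1}^n Σ_{j=1}^m k(x_i, y_j) + (1/(m(m−1))) Σ_{i≠j} k(y_i, y_j) equals the population squared MMD, ∫∫ k dP dP − 2 ∫∫ k dP dQ + ∫∫ k dQ dQ. -/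
open MeasureTheory

section MMDaux

variable {X : Type*} [MeasurableSpace X]

lemma pi_map_eval' (μ : Measure X) [IsProbabilityMeasure μ] {n : ℕ} (i : Fin n) :
    Measure.map (fun x : Fin n → X => x i) (Measure.pi fun _ => μ) = μ := by
  ext s hs
  rw [Measure.map_apply (measurable_pi_apply i) hs]
  have hpre : (fun x : Fin n → X => x i) ⁻¹' s
      = Set.pi Set.univ (fun l => if l = i then s else Set.univ) := by
    ext x
    simp only [Set.mem_preimage, Set.mem_pi, Set.mem_univ, true_implies]
    constructor
    · intro h l; split_ifs with h' <;> simp [h', h]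
    · intro h; have := h i; simpa using this
  rw [hpre, Measure.pi_pi]
  rw [Finset.prod_eq_single i]
  · simp
  · intro b _ hb; simp [hb]
  · simp

lemma pi_map_pair' (μ : Measure X) [IsProbabilityMeasure μ] {n : ℕ} {i j : Fin n}
    (hij : i ≠ j) :
    Measure.map (fun x : Fin n → X => (x i, x j)) (Measure.pi fun _ => μ) = μ.prod μ := by
  have hmeas : Measurable (fun x : Fin n → X => (x i, x j)) :=
    (measurable_pi_apply i).prodMk (measurable_pi_apply j)
  refine (Measure.prod_eq fun s t hs ht => ?_).symm
  rw [Measure.map_apply hmeas (hs.prod ht)]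
  have hpre : (fun x : Fin n → X => (x i, x j)) ⁻¹' (s ×ˢ t)
      = Set.pi Set.univ (fun l => if l = i then s else if l = j then t else Set.univ) := by
    ext x
    simp only [Set.mem_preimage, Set.mem_prod, Set.mem_pi, Set.mem_univ, true_implies]
    constructor
    · rintro ⟨h1, h2⟩ l
      split_ifs <;> simp_all
    · intro h
      refine ⟨?_, ?_⟩
      · have := h i; simpa using this
      · have := h j; simpa [hij.symm] using this
  rw [hpre, Measure.pi_pi]
  rw [← Finset.prod_subset (Finset.subset_univ ({i, j} : Finset (Fin n)))
    (by intro l _ hl; simp only [Finset.mem_insert, Finset.mem_singleton, not_or] at hl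
        simp [hl.1, hl.2])]
  rw [Finset.prod_pair hij]
  simp [hij, Ne.symm hij]

lemma integrable_k_comp {k : X → X → ℝ} (hk : Measurable (Function.uncurry k)) {C : ℝ}
    (hC : ∀ x y, |k x y| ≤ C) {Z : Type*} [MeasurableSpace Z] (π : Measure Z)
    [IsFiniteMeasure π] {a b : Z → X} (ha : Measurable a) (hb : Measurable b) :
    Integrable (fun z => k (a z) (b z)) π :=
  (integrable_const C).mono' ((hk.comp (ha.prodMk hb)).aestronglyMeasurable)
    (Filter.Eventually.of_forall fun z => by
      simpa [Real.norm_eq_abs] using hC (a z) (b z))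

lemma integral_k_of_map {k : X → X → ℝ} (hk : Measurable (Function.uncurry k))
    {Z : Type*} [MeasurableSpace Z] (π : Measure Z)
    {a b : Z → X} (ha : Measurable a) (hb : Measurable b)
    (μ ν : Measure X) [SFinite μ] [SigmaFinite ν]
    (hmap : Measure.map (fun z => (a z, b z)) π = μ.prod ν)
    (hint : Integrable (fun p : X × X => k p.1 p.2) (μ.prod ν)) :
    ∫ z, k (a z) (b z) ∂π = ∫ x, ∫ y, k x y ∂ν ∂μ := by
  have hmeas : Measurable (fun z => (a z, b z)) := ha.prodMk hb
  have h1 : ∫ z, k (a z) (b z) ∂π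
      = ∫ p : X × X, k p.1 p.2 ∂(Measure.map (fun z => (a z, b z)) π) := by
    rw [integral_map hmeas.aemeasurable]
    rw [hmap]; exact hk.aestronglyMeasurable
  rw [h1, hmap, MeasureTheory.integral_prod _ hint]

end MMDaux

/-- The unbiased empirical squared MMD estimator is unbiased: its expectation over
i.i.d. samples equals the population squared MMD. -/
theorem unbiased_sq_mmd_estimator_unbiased
    {X : Type*} [MeasurableSpace X] (k : X → X → ℝ)
    (hk : Measurable (Function.uncurry k)) (C : ℝ) (hC : ∀ x y, |k x y| ≤ C)
    (P Q : Measure X) [IsProbabilityMeasure P] [IsProbabilityMeasure Q]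
    (n m : ℕ) (hn : 2 ≤ n) (hm : 2 ≤ m) :
    (∫ z : (Fin n → X) × (Fin m → X),
        ((1 / ((n : ℝ) * ((n : ℝ) - 1))) *
            ∑ i : Fin n, ∑ j : Fin n, (if i ≠ j then k (z.1 i) (z.1 j) else 0)
          - (2 / ((m : ℝ) * n)) * ∑ i : Fin n, ∑ j : Fin m, k (z.1 i) (z.2 j)
          + (1 / ((m : ℝ) * ((m : ℝ) - 1))) *
              ∑ i : Fin m, ∑ j : Fin m, (if i ≠ j then k (z.2 i) (z.2 j) else 0))
        ∂((Measure.pi fun _ : Fin n => P).prod (Measure.pi fun _ : Fin m => Q)))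
      = (∫ x, (∫ x', k x x' ∂P) ∂P) - 2 * (∫ x, (∫ y, k x y ∂Q) ∂P)
        + ∫ y, (∫ y', k y y' ∂Q) ∂Q := by
  set μn : Measure (Fin n → X) := Measure.pi fun _ => P with hμn
  set νm : Measure (Fin m → X) := Measure.pi fun _ => Q with hνm
  set π : Measure ((Fin n → X) × (Fin m → X)) := μn.prod νm with hπ
  set A : ℝ := ∫ x, (∫ x', k x x' ∂P) ∂P with hA
  set B : ℝ := ∫ x, (∫ y, k x y ∂Q) ∂P with hB
  set D : ℝ := ∫ y, (∫ y', k y y' ∂Q) ∂Q with hD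
  -- integrability of the pair kernel on products of probability measures
  have hintPP : Integrable (fun p : X × X => k p.1 p.2) (P.prod P) :=
    integrable_k_comp hk hC _ measurable_fst measurable_snd
  have hintPQ : Integrable (fun p : X × X => k p.1 p.2) (P.prod Q) :=
    integrable_k_comp hk hC _ measurable_fst measurable_snd
  have hintQQ : Integrable (fun p : X × X => k p.1 p.2) (Q.prod Q) :=
    integrable_k_comp hk hC _ measurable_fst measurable_snd
  -- measurability of coordinate maps
  have hma : ∀ i : Fin n, Measurable fun z : (Fin n → X) × (Fin m → X) => z.1 i :=
    fun i => (measurable_pi_apply i).comp measurable_fst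
  have hmb : ∀ j : Fin m, Measurable fun z : (Fin n → X) × (Fin m → X) => z.2 j :=
    fun j => (measurable_pi_apply j).comp measurable_snd
  -- per-pair integrals
  have hPP : ∀ i j : Fin n, i ≠ j →
      ∫ z, k (z.1 i) (z.1 j) ∂π = A := by
    intro i j hij
    refine integral_k_of_map hk π (hma i) (hma j) P P ?_ hintPP
    have : (fun z : (Fin n → X) × (Fin m → X) => (z.1 i, z.1 j))
        = (fun x : Fin n → X => (x i, x j)) ∘ Prod.fst := rfl
    rw [this, ← Measure.map_map ((measurable_pi_apply i).prodMk (measurable_pi_apply j))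
      measurable_fst]
    rw [hπ, Measure.map_fst_prod]
    simp [hμn, pi_map_pair' P hij]
  have hQQ : ∀ i j : Fin m, i ≠ j →
      ∫ z, k (z.2 i) (z.2 j) ∂π = D := by
    intro i j hij
    refine integral_k_of_map hk π (hmb i) (hmb j) Q Q ?_ hintQQ
    have : (fun z : (Fin n → X) × (Fin m → X) => (z.2 i, z.2 j))
        = (fun x : Fin m → X => (x i, x j)) ∘ Prod.snd := rfl
    rw [this, ← Measure.map_map ((measurable_pi_apply i).prodMk (measurable_pi_apply j))
      measurable_snd]
    rw [hπ, Measure.map_snd_prod]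
    simp [hνm, pi_map_pair' Q hij]
  have hPQ : ∀ (i : Fin n) (j : Fin m),
      ∫ z, k (z.1 i) (z.2 j) ∂π = B := by
    intro i j
    refine integral_k_of_map hk π (hma i) (hmb j) P Q ?_ hintPQ
    have : (fun z : (Fin n → X) × (Fin m → X) => (z.1 i, z.2 j))
        = Prod.map (fun x : Fin n → X => x i) (fun y : Fin m → X => y j) := rfl
    rw [this, hπ, ← Measure.map_prod_map _ _ (measurable_pi_apply i) (measurable_pi_apply j),
      pi_map_eval' P i, pi_map_eval' Q j]
  -- integrability of each summand
  have Int1 : ∀ i j : Fin n,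
      Integrable (fun z : (Fin n → X) × (Fin m → X) =>
        if i ≠ j then k (z.1 i) (z.1 j) else 0) π := by
    intro i j
    by_cases h : i = j
    · simp [h]
    · simpa [h] using integrable_k_comp hk hC π (hma i) (hma j)
  have Int2 : ∀ (i : Fin n) (j : Fin m),
      Integrable (fun z : (Fin n → X) × (Fin m → X) => k (z.1 i) (z.2 j)) π :=
    fun i j => integrable_k_comp hk hC π (hma i) (hmb j)
  have Int3 : ∀ i j : Fin m,
      Integrable (fun z : (Fin n → X) × (Fin m → X) =>
        if i ≠ j then k (z.2 i) (z.2 j) else 0) π := by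
    intro i j
    by_cases h : i = j
    · simp [h]
    · simpa [h] using integrable_k_comp hk hC π (hmb i) (hmb j)
  have IntS1 : Integrable (fun z : (Fin n → X) × (Fin m → X) =>
      ∑ i : Fin n, ∑ j : Fin n, (if i ≠ j then k (z.1 i) (z.1 j) else 0)) π :=
    integrable_finset_sum _ fun i _ => integrable_finset_sum _ fun j _ => Int1 i j
  have IntS2 : Integrable (fun z : (Fin n → X) × (Fin m → X) =>
      ∑ i : Fin n, ∑ j : Fin m, k (z.1 i) (z.2 j)) π :=
    integrable_finset_sum _ fun i _ => integrable_finset_sum _ fun j _ => Int2 i j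
  have IntS3 : Integrable (fun z : (Fin n → X) × (Fin m → X) =>
      ∑ i : Fin m, ∑ j : Fin m, (if i ≠ j then k (z.2 i) (z.2 j) else 0)) π :=
    integrable_finset_sum _ fun i _ => integrable_finset_sum _ fun j _ => Int3 i j
  -- integrals of the three sums
  have hS1 : ∫ z, (∑ i : Fin n, ∑ j : Fin n,
      (if i ≠ j then k (z.1 i) (z.1 j) else 0)) ∂π = (n : ℝ) * ((n : ℝ) - 1) * A := by
    rw [integral_finset_sum _ fun i _ => integrable_finset_sum _ fun j _ => Int1 i j]
    have : ∀ i : Fin n, ∫ z, (∑ j : Fin n,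
        (if i ≠ j then k (z.1 i) (z.1 j) else 0)) ∂π = ((n : ℝ) - 1) * A := by
      intro i
      rw [integral_finset_sum _ fun j _ => Int1 i j]
      have hterm : ∀ j : Fin n, ∫ z, (if i ≠ j then k (z.1 i) (z.1 j) else 0) ∂π
          = if i = j then 0 else A := by
        intro j
        by_cases h : i = j
        · simp [h]
        · simp [h, hPP i j h]
      simp_rw [hterm]
      have : ∀ j : Fin n, (if i = j then (0:ℝ) else A)
          = A - (if i = j then A else 0) := by
        intro j; by_cases h : i = j <;> simp [h]
      simp_rw [this, Finset.sum_sub_distrib, Finset.sum_const, Finset.card_univ,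
        Fintype.card_fin, Finset.sum_ite_eq, Finset.mem_univ, if_true, nsmul_eq_mul]
      ring
    simp_rw [this, Finset.sum_const, Finset.card_univ, Fintype.card_fin, nsmul_eq_mul]
    ring
  have hS2 : ∫ z, (∑ i : Fin n, ∑ j : Fin m, k (z.1 i) (z.2 j)) ∂π
      = (n : ℝ) * (m : ℝ) * B := by
    rw [integral_finset_sum _ fun i _ => integrable_finset_sum _ fun j _ => Int2 i j]
    simp_rw [integral_finset_sum _ fun j _ => Int2 _ j, hPQ, Finset.sum_const,
      Finset.card_univ, Fintype.card_fin, nsmul_eq_mul]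
    ring
  have hS3 : ∫ z, (∑ i : Fin m, ∑ j : Fin m,
      (if i ≠ j then k (z.2 i) (z.2 j) else 0)) ∂π = (m : ℝ) * ((m : ℝ) - 1) * D := by
    rw [integral_finset_sum _ fun i _ => integrable_finset_sum _ fun j _ => Int3 i j]
    have : ∀ i : Fin m, ∫ z, (∑ j : Fin m,
        (if i ≠ j then k (z.2 i) (z.2 j) else 0)) ∂π = ((m : ℝ) - 1) * D := by
      intro i
      rw [integral_finset_sum _ fun j _ => Int3 i j]
      have hterm : ∀ j : Fin m, ∫ z, (if i ≠ j then k (z.2 i) (z.2 j) else 0) ∂π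
          = if i = j then 0 else D := by
        intro j
        by_cases h : i = j
        · simp [h]
        · simp [h, hQQ i j h]
      simp_rw [hterm]
      have : ∀ j : Fin m, (if i = j then (0:ℝ) else D)
          = D - (if i = j then D else 0) := by
        intro j; by_cases h : i = j <;> simp [h]
      simp_rw [this, Finset.sum_sub_distrib, Finset.sum_const, Finset.card_univ,
        Fintype.card_fin, Finset.sum_ite_eq, Finset.mem_univ, if_true, nsmul_eq_mul]
      ring
    simp_rw [this, Finset.sum_const, Finset.card_univ, Fintype.card_fin, nsmul_eq_mul]
    ring
  -- put it together
  have E1 : Integrable (fun z : (Fin n → X) × (Fin m → X) =>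
      (1 / ((n : ℝ) * ((n : ℝ) - 1))) *
        ∑ i : Fin n, ∑ j : Fin n, (if i ≠ j then k (z.1 i) (z.1 j) else 0)) π :=
    IntS1.const_mul _
  have E2 : Integrable (fun z : (Fin n → X) × (Fin m → X) =>
      (2 / ((m : ℝ) * n)) * ∑ i : Fin n, ∑ j : Fin m, k (z.1 i) (z.2 j)) π :=
    IntS2.const_mul _
  have E3 : Integrable (fun z : (Fin n → X) × (Fin m → X) =>
      (1 / ((m : ℝ) * ((m : ℝ) - 1))) *
        ∑ i : Fin m, ∑ j : Fin m, (if i ≠ j then k (z.2 i) (z.2 j) else 0)) π :=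
    IntS3.const_mul _
  have E12 : Integrable (fun z : (Fin n → X) × (Fin m → X) =>
      (1 / ((n : ℝ) * ((n : ℝ) - 1))) *
          (∑ i : Fin n, ∑ j : Fin n, (if i ≠ j then k (z.1 i) (z.1 j) else 0))
        - (2 / ((m : ℝ) * n)) * ∑ i : Fin n, ∑ j : Fin m, k (z.1 i) (z.2 j)) π :=
    E1.sub E2
  rw [integral_add E12 E3, integral_sub E1 E2,
    integral_const_mul, integral_const_mul, integral_const_mul, hS1, hS2, hS3]
  have hn' : (n : ℝ) ≥ 2 := by exact_mod_cast hn
  have hm' : (m : ℝ) ≥ 2 := by exact_mod_cast hm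
  have h1 : (n : ℝ) ≠ 0 := by linarith
  have h2 : (n : ℝ) - 1 ≠ 0 := by linarith
  have h3 : (m : ℝ) ≠ 0 := by linarith
  have h4 : (m : ℝ) - 1 ≠ 0 := by linarith
  field_simp
end

section
/- Let X be a measurable space, H a real Hilbert space, and φ : X → H a strongly measurable feature map whose kernel k(x,y) = ⟪φ(x), φ(y)⟫_H satisfies 0 ≤ k(x,y) ≤ K for all x, y ∈ X, for some constant K > 0. Let P be a probability measure on X, let N ≥ 1, and for (x,y) ∈ X^N × X^N let D_b(x,y) = ‖ (1/N) Σ_{i=1}^N φ(x_i) − (1/N) Σ_{j=1}^N φ(y_j) ‖_H. Then for every ε > 0, the product measure P^{⊗N} ⊗ P^{⊗N} of the event { (x,y) : D_b(x,y) > √(2K/N) + ε } is at most exp( − ε² N / (4K) ). -/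
open MeasureTheory Real Set


private lemma key_analytic {p : ℝ} (hp0 : 0 ≤ p) (hp1 : p ≤ 1) (h : ℝ) :
    1 - p + p * Real.exp h ≤ Real.exp (p * h + h ^ 2 / 8) := by
  rcases eq_or_lt_of_le hp0 with hp | hp
  · have h0 : (0:ℝ) ≤ h ^ 2 / 8 := by positivity
    rw [← hp]
    simpa using Real.one_le_exp h0
  set D : ℝ → ℝ := fun x => 1 - p + p * Real.exp x with hD
  have hDpos : ∀ x, 0 < D x := fun x =>
    add_pos_of_nonneg_of_pos (by linarith) (by positivity)
  set ψ : ℝ → ℝ := fun x => p + x / 4 - p * Real.exp x / D x with hψ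
  set φ : ℝ → ℝ := fun x => p * x + x ^ 2 / 8 - Real.log (D x) with hφ
  have hDd : ∀ x, HasDerivAt D (p * Real.exp x) x := fun x => by
    exact ((Real.hasDerivAt_exp x).const_mul p).const_add (1 - p)
  have hφd : ∀ x, HasDerivAt φ (ψ x) x := by
    intro x
    have h1a : HasDerivAt (fun x : ℝ => p * x) p x := by
      simpa using (hasDerivAt_id x).const_mul p
    have h1b : HasDerivAt (fun x : ℝ => x ^ 2 / 8) (x / 4) x := by
      have := (hasDerivAt_pow 2 x).div_const 8
      refine this.congr_deriv ?_
      ring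
    have h1 : HasDerivAt (fun x : ℝ => p * x + x ^ 2 / 8) (p + x / 4) x := h1a.add h1b
    have h2 : HasDerivAt (fun x => Real.log (D x)) (p * Real.exp x / D x) x :=
      (hDd x).log (hDpos x).ne'
    exact h1.sub h2
  have hψd : ∀ x, HasDerivAt ψ (1 / 4 - p * Real.exp x * (1 - p) / (D x) ^ 2) x := by
    intro x
    have h3 : HasDerivAt (fun x => p * Real.exp x / D x)
        ((p * Real.exp x * D x - p * Real.exp x * (p * Real.exp x)) / (D x) ^ 2) x :=
      ((Real.hasDerivAt_exp x).const_mul p).div (hDd x) (hDpos x).ne'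
    have h4 : HasDerivAt (fun x : ℝ => p + x / 4) (1 / 4) x := by
      simpa using ((hasDerivAt_id x).div_const 4).const_add p
    have := h4.sub h3
    refine this.congr_deriv ?_
    have : p * Real.exp x * D x - p * Real.exp x * (p * Real.exp x)
        = p * Real.exp x * (1 - p) := by rw [hD]; ring
    rw [this]
  have hψmono : Monotone ψ := by
    apply monotone_of_deriv_nonneg (fun x => (hψd x).differentiableAt)
    intro x
    rw [(hψd x).deriv]
    have hd := hDpos x
    have he : 0 < Real.exp x := Real.exp_pos x
    have hDx : D x = 1 - p + p * Real.exp x := rfl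
    have key : 4 * (p * Real.exp x * (1 - p)) ≤ (D x) ^ 2 := by
      rw [hDx]; nlinarith [sq_nonneg (p * Real.exp x - (1 - p))]
    have : p * Real.exp x * (1 - p) / (D x) ^ 2 ≤ 1 / 4 := by
      rw [div_le_iff₀ (by positivity)]; nlinarith [key]
    linarith
  have hψ0 : ψ 0 = 0 := by simp [hψ, hD]
  have hφ0 : φ 0 = 0 := by simp [hφ, hD]
  have hφc : Continuous φ :=
    continuous_iff_continuousAt.2 fun x => (hφd x).differentiableAt.continuousAt
  have hφnn : ∀ x, 0 ≤ φ x := by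
    intro x
    rcases le_total 0 x with hx | hx
    · have : MonotoneOn φ (Ici 0) := by
        apply monotoneOn_of_deriv_nonneg (convex_Ici 0)
          hφc.continuousOn
          (fun y hy => (hφd y).differentiableAt.differentiableWithinAt)
        intro y hy
        rw [(hφd y).deriv]
        rw [interior_Ici] at hy
        calc (0:ℝ) = ψ 0 := hψ0.symm
        _ ≤ ψ y := hψmono hy.le
      calc (0:ℝ) = φ 0 := hφ0.symm
      _ ≤ φ x := this (self_mem_Ici) hx hx
    · have : AntitoneOn φ (Iic 0) := by
        apply antitoneOn_of_deriv_nonpos (convex_Iic 0)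
          hφc.continuousOn
          (fun y hy => (hφd y).differentiableAt.differentiableWithinAt)
        intro y hy
        rw [(hφd y).deriv]
        rw [interior_Iic] at hy
        calc ψ y ≤ ψ 0 := hψmono hy.le
        _ = 0 := hψ0
      calc (0:ℝ) = φ 0 := hφ0.symm
      _ ≤ φ x := this hx self_mem_Iic hx
  have := hφnn h
  have hlog : Real.log (D h) ≤ p * h + h ^ 2 / 8 := by rw [hφ] at this; linarith
  calc D h = Real.exp (Real.log (D h)) := (Real.exp_log (hDpos h)).symm
  _ ≤ Real.exp (p * h + h ^ 2 / 8) := Real.exp_le_exp.2 hlog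



private lemma integrable_of_bddAll {Ω E : Type*} [MeasurableSpace Ω] {μ : Measure Ω}
    [IsFiniteMeasure μ] [NormedAddCommGroup E] {f : Ω → E}
    (hf : AEStronglyMeasurable f μ) {C : ℝ} (h : ∀ ω, ‖f ω‖ ≤ C) : Integrable f μ :=
  Integrable.mono' (integrable_const C) hf (ae_of_all _ h)

private lemma hoeffding_lemma {Ω : Type*} [MeasurableSpace Ω] (μ : Measure Ω)
    [IsProbabilityMeasure μ] {F : Ω → ℝ} (hF : AEStronglyMeasurable F μ)
    {a b : ℝ} (hab : ∀ ω, F ω ∈ Set.Icc a b) (hmean : ∫ ω, F ω ∂μ = 0) (t : ℝ) :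
    ∫ ω, Real.exp (t * F ω) ∂μ ≤ Real.exp (t ^ 2 * (b - a) ^ 2 / 8) := by
  have hne : Nonempty Ω := by
    by_contra h
    have : IsEmpty Ω := not_nonempty_iff.1 h
    exact IsProbabilityMeasure.ne_zero μ (Measure.eq_zero_of_isEmpty μ)
  obtain ⟨ω₀⟩ := hne
  have hab' : a ≤ b := (hab ω₀).1.trans (hab ω₀).2
  have hFbd : ∀ ω, ‖F ω‖ ≤ |a| + |b| := by
    intro ω
    obtain ⟨h1, h2⟩ := hab ω
    rw [Real.norm_eq_abs, abs_le]
    constructor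
    · have := neg_abs_le a; have := abs_nonneg b; linarith
    · have := le_abs_self b; have := abs_nonneg a; linarith
  have hFint : Integrable F μ := integrable_of_bddAll hF hFbd
  have ha : a ≤ 0 := by
    have h1 : ∫ _ω, a ∂μ ≤ ∫ ω, F ω ∂μ :=
      integral_mono (integrable_const a) hFint fun ω => (hab ω).1
    rwa [hmean, integral_const, probReal_univ, one_smul] at h1
  have hb : 0 ≤ b := by
    have h1 : ∫ ω, F ω ∂μ ≤ ∫ _ω, b ∂μ :=
      integral_mono hFint (integrable_const b) fun ω => (hab ω).2
    rwa [hmean, integral_const, probReal_univ, one_smul] at h1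
  rcases eq_or_lt_of_le hab' with heq | hlt
  · have ha0 : a = 0 := le_antisymm ha (heq ▸ hb)
    have hF0 : ∀ ω, F ω = 0 := fun ω =>
      le_antisymm ((hab ω).2.trans (heq ▸ ha0).le) (ha0 ▸ (hab ω).1)
    simp only [hF0, mul_zero, Real.exp_zero]
    rw [integral_const, probReal_univ, one_smul]
    exact Real.one_le_exp (by positivity)
  have hba : (0:ℝ) < b - a := by linarith
  have hexpbd : ∀ ω, Real.exp (t * F ω) ≤
      ((b - F ω) * Real.exp (t * a) + (F ω - a) * Real.exp (t * b)) / (b - a) := by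
    intro ω
    obtain ⟨h1, h2⟩ := hab ω
    have hw1 : (0:ℝ) ≤ (b - F ω) / (b - a) := div_nonneg (by linarith) hba.le
    have hw2 : (0:ℝ) ≤ (F ω - a) / (b - a) := div_nonneg (by linarith) hba.le
    have hws : (b - F ω) / (b - a) + (F ω - a) / (b - a) = 1 := by field_simp; ring
    have hcx := convexOn_exp.2 (Set.mem_univ (t * a)) (Set.mem_univ (t * b)) hw1 hw2 hws
    simp only [smul_eq_mul] at hcx
    have harg : (b - F ω) / (b - a) * (t * a) + (F ω - a) / (b - a) * (t * b) = t * F ω := by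
      field_simp; ring
    rw [harg] at hcx
    calc Real.exp (t * F ω) ≤ (b - F ω) / (b - a) * Real.exp (t * a)
          + (F ω - a) / (b - a) * Real.exp (t * b) := hcx
      _ = ((b - F ω) * Real.exp (t * a) + (F ω - a) * Real.exp (t * b)) / (b - a) := by ring
  have hintR : Integrable (fun ω => ((b - F ω) * Real.exp (t * a)
      + (F ω - a) * Real.exp (t * b)) / (b - a)) μ := by
    apply Integrable.div_const
    exact (((integrable_const b).sub hFint).mul_const _).add
      ((hFint.sub (integrable_const a)).mul_const _)
  have hintL : Integrable (fun ω => Real.exp (t * F ω)) μ := by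
    apply integrable_of_bddAll (C := Real.exp (|t| * (|a| + |b|)))
    · exact (Real.continuous_exp.comp_aestronglyMeasurable (hF.const_mul t))
    · intro ω
      rw [Real.norm_eq_abs, abs_of_pos (Real.exp_pos _)]
      apply Real.exp_le_exp.2
      calc t * F ω ≤ |t * F ω| := le_abs_self _
        _ = |t| * |F ω| := abs_mul t (F ω)
        _ ≤ |t| * (|a| + |b|) := by
            apply mul_le_mul_of_nonneg_left _ (abs_nonneg t)
            simpa [Real.norm_eq_abs] using hFbd ω
  have step1 : ∫ ω, Real.exp (t * F ω) ∂μ ≤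
      (b * Real.exp (t * a) + (-a) * Real.exp (t * b)) / (b - a) := by
    calc ∫ ω, Real.exp (t * F ω) ∂μ
        ≤ ∫ ω, ((b - F ω) * Real.exp (t * a) + (F ω - a) * Real.exp (t * b)) / (b - a) ∂μ :=
          integral_mono hintL hintR hexpbd
      _ = (b * Real.exp (t * a) + (-a) * Real.exp (t * b)) / (b - a) := by
          rw [integral_div]
          congr 1
          have hpt : ∀ ω, (b - F ω) * Real.exp (t * a) + (F ω - a) * Real.exp (t * b)
              = (b * Real.exp (t * a) + (-a) * Real.exp (t * b))
                + (Real.exp (t * b) - Real.exp (t * a)) * F ω := fun ω => by ring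
          simp_rw [hpt]
          rw [integral_add (integrable_const _) (hFint.const_mul _), integral_const_mul,
            hmean, mul_zero, add_zero, integral_const, probReal_univ,
            one_smul]
  refine step1.trans ?_
  set p : ℝ := -a / (b - a) with hp
  set h : ℝ := t * (b - a) with hh
  have hp0 : 0 ≤ p := div_nonneg (by linarith) hba.le
  have hp1 : p ≤ 1 := by
    rw [hp, div_le_one hba]; linarith
  have e1 : t * a = -(p * h) := by rw [hp, hh]; field_simp
  have e2 : t * b = -(p * h) + h := by
    rw [hp, hh]; field_simp; ring
  rw [e1, e2, Real.exp_add]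
  have hkey := key_analytic hp0 hp1 h
  calc (b * Real.exp (-(p * h)) + -a * (Real.exp (-(p * h)) * Real.exp h)) / (b - a)
      = Real.exp (-(p * h)) * (1 - p + p * Real.exp h) := by
        rw [hp]; field_simp; ring
    _ ≤ Real.exp (-(p * h)) * Real.exp (p * h + h ^ 2 / 8) :=
        mul_le_mul_of_nonneg_left hkey (Real.exp_pos _).le
    _ = Real.exp (h ^ 2 / 8) := by rw [← Real.exp_add]; ring_nf
    _ = Real.exp (t ^ 2 * (b - a) ^ 2 / 8) := by rw [hh]; ring_nf



private lemma nonempty_of_prob {Ω : Type*} [MeasurableSpace Ω] (μ : Measure Ω)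
    [IsProbabilityMeasure μ] : Nonempty Ω := by
  by_contra h
  have : IsEmpty Ω := not_nonempty_iff.1 h
  exact IsProbabilityMeasure.ne_zero μ (Measure.eq_zero_of_isEmpty μ)

private lemma mcdiarmid_mgf {Y : Type*} [MeasurableSpace Y] (Q : Measure Y)
    [IsProbabilityMeasure Q] (t c : ℝ) (hc : 0 ≤ c) :
    ∀ (n : ℕ) (f : (Fin n → Y) → ℝ), Measurable f → ∀ (B : ℝ), (∀ w, |f w| ≤ B) →
      (∀ (w : Fin n → Y) (i : Fin n) (v : Y), f (Function.update w i v) - f w ≤ c) →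
      ∫ w, Real.exp (t * (f w - ∫ u, f u ∂(Measure.pi fun _ : Fin n => Q)))
          ∂(Measure.pi fun _ : Fin n => Q)
        ≤ Real.exp (t ^ 2 * c ^ 2 * n / 8) := by
  intro n
  induction n with
  | zero =>
    intro f hf B hB hd
    have hfc : ∀ w, f w = f (fun i => i.elim0) := fun w =>
      congrArg f (funext fun i => i.elim0)
    have : ∫ u, f u ∂(Measure.pi fun _ : Fin 0 => Q) = f (fun i => i.elim0) := by
      rw [integral_congr_ae (ae_of_all _ hfc), integral_const, probReal_univ, one_smul]
    simp_rw [this, hfc]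
    simp
  | succ n ih =>
    intro f hf B hB hd
    set πn : Measure (Fin n → Y) := Measure.pi fun _ => Q with hπn
    set A : Measure (Y × (Fin n → Y)) := Q.prod πn with hA
    haveI hne : Nonempty Y := nonempty_of_prob Q
    -- the measurable equivalence
    set e := MeasurableEquiv.piFinSuccAbove (fun _ : Fin (n + 1) => Y) 0 with he
    have hmp : MeasurePreserving e (Measure.pi fun _ : Fin (n + 1) => Q) A :=
      measurePreserving_piFinSuccAbove (fun _ : Fin (n + 1) => Q) 0
    have hsymm : ∀ z : Y × (Fin n → Y), e.symm z = Fin.cons z.1 z.2 := by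
      intro z
      show (Fin.insertNthEquiv (fun _ : Fin (n + 1) => Y) 0) z = _
      simp [Fin.insertNthEquiv, Fin.insertNth_zero']
    -- measurability of cons
    have hconsm : Measurable (fun z : Y × (Fin n → Y) => (Fin.cons z.1 z.2 : Fin (n+1) → Y)) := by
      apply measurable_pi_iff.2
      intro j
      refine Fin.cases ?_ ?_ j
      · simpa using measurable_fst
      · intro j'
        simpa [Function.comp_def] using (measurable_pi_apply j').comp measurable_snd
    have hfc : Measurable (fun z : Y × (Fin n → Y) => f (Fin.cons z.1 z.2)) := hf.comp hconsm
    set m : ℝ := ∫ u, f u ∂(Measure.pi fun _ : Fin (n + 1) => Q) with hm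
    have hmB : |m| ≤ B := by
      rw [hm, ← Real.norm_eq_abs]
      calc ‖∫ u, f u ∂(Measure.pi fun _ : Fin (n + 1) => Q)‖
          ≤ B * ((Measure.pi fun _ : Fin (n + 1) => Q) Set.univ).toReal :=
            norm_integral_le_of_norm_le_const (ae_of_all _ fun w => by
              simpa [Real.norm_eq_abs] using hB w)
        _ = B := by simp
    set g : (Fin n → Y) → ℝ := fun w => ∫ y, f (Fin.cons y w) ∂Q with hg
    have hgmeas : StronglyMeasurable g := by
      have : Measurable (fun z : (Fin n → Y) × Y => f (Fin.cons z.2 z.1)) :=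
        hf.comp (hconsm.comp (measurable_snd.prodMk measurable_fst))
      exact this.stronglyMeasurable.integral_prod_right'
    have hgB : ∀ w, |g w| ≤ B := by
      intro w
      rw [← Real.norm_eq_abs]
      calc ‖∫ y, f (Fin.cons y w) ∂Q‖ ≤ B * (Q Set.univ).toReal :=
        norm_integral_le_of_norm_le_const (ae_of_all _ fun y => by
          simpa [Real.norm_eq_abs] using hB _)
        _ = B := by simp
    have hconsy : ∀ w : Fin n → Y, Measurable (fun y : Y => f (Fin.cons y w)) := fun w =>
      hfc.comp (measurable_id.prodMk measurable_const)
    have hintcons : ∀ w : Fin n → Y, Integrable (fun y => f (Fin.cons y w)) Q := fun w =>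
      integrable_of_bddAll (hconsy w).aestronglyMeasurable
        (fun y => by simpa [Real.norm_eq_abs] using hB _)
    -- g has bounded differences
    have hgd : ∀ (w : Fin n → Y) (i : Fin n) (v : Y), g (Function.update w i v) - g w ≤ c := by
      intro w i v
      rw [hg]
      simp only
      rw [← integral_sub (hintcons _) (hintcons _)]
      calc ∫ y, (f (Fin.cons y (Function.update w i v)) - f (Fin.cons y w)) ∂Q
          ≤ ∫ _y, c ∂Q := by
            apply integral_mono ((hintcons _).sub (hintcons _)) (integrable_const c)
            intro y
            simp only [Pi.sub_apply]
            have heq : (Fin.cons y (Function.update w i v) : Fin (n+1) → Y)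
                = Function.update (Fin.cons y w) i.succ v := by
              funext j
              rcases eq_or_ne j i.succ with rfl | hj
              · rw [Function.update_self, Fin.cons_succ, Function.update_self]
              · rw [Function.update_of_ne hj]
                rcases Fin.eq_zero_or_eq_succ j with rfl | ⟨j', rfl⟩
                · rw [Fin.cons_zero, Fin.cons_zero]
                · rw [Fin.cons_succ, Fin.cons_succ,
                    Function.update_of_ne (fun hji => hj (by rw [hji]))]
            rw [heq]
            exact hd _ _ _
        _ = c := by simp
    -- mean of g is m
    have hintfull : Integrable (fun z : Y × (Fin n → Y) => f (Fin.cons z.1 z.2)) A :=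
      integrable_of_bddAll hfc.aestronglyMeasurable
        (fun z => by simpa [Real.norm_eq_abs] using hB _)
    have hcomp : ∀ (G : (Fin (n+1) → Y) → ℝ),
        ∫ w, G w ∂(Measure.pi fun _ : Fin (n + 1) => Q) = ∫ z, G (Fin.cons z.1 z.2) ∂A := by
      intro G
      have := hmp.integral_comp e.measurableEmbedding (fun z => G (e.symm z))
      simp only [MeasurableEquiv.symm_apply_apply] at this
      rw [this]
      exact integral_congr_ae (ae_of_all _ fun z => by simp only [hsymm])
    have hgm : ∫ w, g w ∂πn = m := by
      rw [hm, hcomp f, integral_prod_symm _ hintfull]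
    -- inner Hoeffding bound
    have hinner : ∀ w : Fin n → Y,
        ∫ y, Real.exp (t * (f (Fin.cons y w) - m)) ∂Q
          ≤ Real.exp (t ^ 2 * c ^ 2 / 8) * Real.exp (t * (g w - m)) := by
      intro w
      set F : Y → ℝ := fun y => f (Fin.cons y w) - g w with hF
      have hrange : ∀ y y', F y - F y' ≤ c := by
        intro y y'
        rw [hF]
        simp only
        have heq : (Fin.cons y w : Fin (n+1) → Y) = Function.update (Fin.cons y' w) 0 y :=
          (Fin.update_cons_zero _ _ _).symm
        calc f (Fin.cons y w) - g w - (f (Fin.cons y' w) - g w)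
            = f (Function.update (Fin.cons y' w) 0 y) - f (Fin.cons y' w) := by rw [← heq]; ring
          _ ≤ c := hd _ _ _
      obtain ⟨y₀⟩ := id hne
      have hbdd : BddAbove (Set.range F) := by
        refine ⟨F y₀ + c, ?_⟩
        rintro z ⟨y, rfl⟩
        linarith [hrange y y₀]
      set bS := sSup (Set.range F) with hbS
      have hFle : ∀ y, F y ≤ bS := fun y => le_csSup hbdd (Set.mem_range_self y)
      have hFge : ∀ y, bS - c ≤ F y := by
        intro y
        have : bS ≤ F y + c := by
          apply csSup_le (Set.range_nonempty F)
          rintro z ⟨y', rfl⟩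
          linarith [hrange y' y]
        linarith
      have hFmean : ∫ y, F y ∂Q = 0 := by
        rw [hF]
        simp only
        rw [integral_sub (hintcons w) (integrable_const _), integral_const, probReal_univ, one_smul]
        simp [hg]
      have hFmeas : AEStronglyMeasurable F Q :=
        ((hconsy w).sub measurable_const).aestronglyMeasurable
      have hhoef := hoeffding_lemma Q hFmeas (fun y => ⟨hFge y, hFle y⟩) hFmean t
      have hhoef' : ∫ y, Real.exp (t * F y) ∂Q ≤ Real.exp (t ^ 2 * c ^ 2 / 8) := by
        simpa [sub_sub_cancel] using hhoef
      have hptw : ∀ y, Real.exp (t * (f (Fin.cons y w) - m))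
          = Real.exp (t * F y) * Real.exp (t * (g w - m)) := by
        intro y
        rw [← Real.exp_add]
        congr 1
        rw [hF]
        ring
      calc ∫ y, Real.exp (t * (f (Fin.cons y w) - m)) ∂Q
          = ∫ y, Real.exp (t * F y) * Real.exp (t * (g w - m)) ∂Q :=
            integral_congr_ae (ae_of_all _ hptw)
        _ = (∫ y, Real.exp (t * F y) ∂Q) * Real.exp (t * (g w - m)) := integral_mul_const _ _
        _ ≤ Real.exp (t ^ 2 * c ^ 2 / 8) * Real.exp (t * (g w - m)) :=
            mul_le_mul_of_nonneg_right hhoef' (Real.exp_pos _).le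
    -- integrability of the full integrand on the product
    have habs : ∀ (x : ℝ), |x| ≤ B → ∀ s : ℝ, Real.exp (s * (x - m)) ≤ Real.exp (|s| * (B + B)) := by
      intro x hx s
      apply Real.exp_le_exp.2
      calc s * (x - m) ≤ |s * (x - m)| := le_abs_self _
        _ = |s| * |x - m| := abs_mul _ _
        _ ≤ |s| * (B + B) := by
            apply mul_le_mul_of_nonneg_left _ (abs_nonneg s)
            calc |x - m| ≤ |x| + |m| := abs_sub _ _
              _ ≤ B + B := add_le_add hx hmB
    have hfullint : Integrable
        (fun z : Y × (Fin n → Y) => Real.exp (t * (f (Fin.cons z.1 z.2) - m))) A := by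
      apply integrable_of_bddAll (C := Real.exp (|t| * (B + B)))
      · exact (((hfc.sub measurable_const).const_mul t).exp).aestronglyMeasurable
      · intro z
        rw [Real.norm_eq_abs, abs_of_pos (Real.exp_pos _)]
        exact habs _ (hB _) t
    have hgint : Integrable (fun w => Real.exp (t * (g w - m))) πn := by
      apply integrable_of_bddAll (C := Real.exp (|t| * (B + B)))
      · exact (((hgmeas.measurable.sub measurable_const).const_mul t).exp).aestronglyMeasurable
      · intro w
        rw [Real.norm_eq_abs, abs_of_pos (Real.exp_pos _)]
        exact habs _ (hgB _) t
    calc ∫ w, Real.exp (t * (f w - m)) ∂(Measure.pi fun _ : Fin (n + 1) => Q)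
        = ∫ z, Real.exp (t * (f (Fin.cons z.1 z.2) - m)) ∂A :=
          hcomp (fun w => Real.exp (t * (f w - m)))
      _ = ∫ w, ∫ y, Real.exp (t * (f (Fin.cons y w) - m)) ∂Q ∂πn :=
          integral_prod_symm _ hfullint
      _ ≤ ∫ w, Real.exp (t ^ 2 * c ^ 2 / 8) * Real.exp (t * (g w - m)) ∂πn := by
          apply integral_mono_of_nonneg
          · exact ae_of_all _ fun w => integral_nonneg fun y => (Real.exp_pos _).le
          · exact hgint.const_mul _
          · exact ae_of_all _ hinner
      _ = Real.exp (t ^ 2 * c ^ 2 / 8) * ∫ w, Real.exp (t * (g w - m)) ∂πn :=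
          integral_const_mul _ _
      _ ≤ Real.exp (t ^ 2 * c ^ 2 / 8) * Real.exp (t ^ 2 * c ^ 2 * n / 8) := by
          apply mul_le_mul_of_nonneg_left _ (Real.exp_pos _).le
          have := ih g hgmeas.measurable B hgB hgd
          rwa [hgm] at this
      _ = Real.exp (t ^ 2 * c ^ 2 * (n + 1 : ℕ) / 8) := by
          rw [← Real.exp_add]
          congr 1
          push_cast
          ring



private lemma measurable_cons' {Y : Type*} [MeasurableSpace Y] (n : ℕ) :
    Measurable (fun z : Y × (Fin n → Y) => (Fin.cons z.1 z.2 : Fin (n+1) → Y)) := by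
  apply measurable_pi_iff.2
  intro j
  refine Fin.cases ?_ ?_ j
  · simpa using measurable_fst
  · intro j'
    simpa [Function.comp_def] using (measurable_pi_apply j').comp measurable_snd

private lemma integral_pi_succ {Y : Type*} [MeasurableSpace Y] (Q : Measure Y)
    [IsProbabilityMeasure Q] (n : ℕ) (G : (Fin (n+1) → Y) → ℝ)
    (hG : Integrable (fun z : Y × (Fin n → Y) => G (Fin.cons z.1 z.2))
      (Q.prod (Measure.pi fun _ : Fin n => Q))) :
    ∫ w, G w ∂(Measure.pi fun _ : Fin (n+1) => Q)
      = ∫ w, ∫ y, G (Fin.cons y w) ∂Q ∂(Measure.pi fun _ : Fin n => Q) := by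
  set e := MeasurableEquiv.piFinSuccAbove (fun _ : Fin (n + 1) => Y) 0 with he
  have hmp : MeasurePreserving e (Measure.pi fun _ : Fin (n + 1) => Q)
      (Q.prod (Measure.pi fun _ : Fin n => Q)) :=
    measurePreserving_piFinSuccAbove (fun _ : Fin (n + 1) => Q) 0
  have hsymm : ∀ z : Y × (Fin n → Y), e.symm z = Fin.cons z.1 z.2 := by
    intro z
    show (Fin.insertNthEquiv (fun _ : Fin (n + 1) => Y) 0) z = _
    simp [Fin.insertNthEquiv, Fin.insertNth_zero']
  have h1 := hmp.integral_comp e.measurableEmbedding (fun z => G (e.symm z))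
  simp only [MeasurableEquiv.symm_apply_apply] at h1
  have h2 : (fun z : Y × (Fin n → Y) => G (e.symm z))
      = fun z => G (Fin.cons z.1 z.2) := funext fun z => by rw [hsymm]
  rw [h1, h2]
  exact integral_prod_symm _ hG

private lemma second_moment_sum {Y H : Type*} [MeasurableSpace Y] [NormedAddCommGroup H]
    [InnerProductSpace ℝ H] [CompleteSpace H] (Q : Measure Y) [IsProbabilityMeasure Q]
    {ψ : Y → H} (hψ : StronglyMeasurable ψ) {L : ℝ} (hL : 0 ≤ L) (hbd : ∀ y, ‖ψ y‖ ≤ L)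
    (hmean : ∫ y, ψ y ∂Q = 0) :
    ∀ n : ℕ, ∫ w, ‖∑ i : Fin n, ψ (w i)‖ ^ 2 ∂(Measure.pi fun _ : Fin n => Q)
      ≤ L ^ 2 * n := by
  intro n
  have hψint : Integrable ψ Q := integrable_of_bddAll hψ.aestronglyMeasurable hbd
  induction n with
  | zero => simp
  | succ n ih =>
    set πn : Measure (Fin n → Y) := Measure.pi fun _ => Q with hπn
    have hSmeas : StronglyMeasurable (fun w : Fin n → Y => ∑ i, ψ (w i)) := by
      apply Finset.stronglyMeasurable_fun_sum
      intro i _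
      exact hψ.comp_measurable (measurable_pi_apply i)
    have hSbd : ∀ w : Fin n → Y, ‖∑ i, ψ (w i)‖ ≤ L * n := by
      intro w
      calc ‖∑ i, ψ (w i)‖ ≤ ∑ i : Fin n, ‖ψ (w i)‖ := norm_sum_le _ _
        _ ≤ ∑ _i : Fin n, L := Finset.sum_le_sum fun i _ => hbd _
        _ = L * n := by simp [mul_comm]
    have hsum_cons : ∀ (y : Y) (w : Fin n → Y),
        ∑ i : Fin (n+1), ψ ((Fin.cons y w : Fin (n+1) → Y) i) = ψ y + ∑ i : Fin n, ψ (w i) := by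
      intro y w
      rw [Fin.sum_univ_succ]
      simp
    have hmeasz : StronglyMeasurable
        (fun z : Y × (Fin n → Y) => ‖∑ i : Fin (n+1), ψ ((Fin.cons z.1 z.2 : Fin (n+1) → Y) i)‖ ^ 2) := by
      have : StronglyMeasurable (fun z : Y × (Fin n → Y) => ∑ i : Fin (n+1), ψ ((Fin.cons z.1 z.2 : Fin (n+1) → Y) i)) := by
        apply Finset.stronglyMeasurable_fun_sum
        intro i _
        exact hψ.comp_measurable ((measurable_pi_apply i).comp (measurable_cons' n))
      exact this.norm.pow 2
    have hbdz : ∀ z : Y × (Fin n → Y),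
        ‖‖∑ i : Fin (n+1), ψ ((Fin.cons z.1 z.2 : Fin (n+1) → Y) i)‖ ^ 2‖ ≤ (L * (n+1)) ^ 2 := by
      intro z
      rw [norm_pow, norm_norm]
      apply pow_le_pow_left₀ (norm_nonneg _)
      rw [hsum_cons]
      calc ‖ψ z.1 + ∑ i, ψ (z.2 i)‖ ≤ ‖ψ z.1‖ + ‖∑ i, ψ (z.2 i)‖ := norm_add_le _ _
        _ ≤ L + L * n := add_le_add (hbd _) (hSbd _)
        _ = L * (n + 1) := by ring
    have hG : Integrable (fun z : Y × (Fin n → Y) => ‖∑ i : Fin (n+1), ψ ((Fin.cons z.1 z.2 : Fin (n+1) → Y) i)‖ ^ 2)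
        (Q.prod πn) := integrable_of_bddAll hmeasz.aestronglyMeasurable hbdz
    rw [integral_pi_succ Q n _ hG]
    have hSint2 : Integrable (fun w : Fin n → Y => ‖∑ i : Fin n, ψ (w i)‖ ^ 2) πn := by
      apply integrable_of_bddAll (C := (L * n) ^ 2)
      case hf => exact (hSmeas.norm.pow 2).aestronglyMeasurable
      intro w
      show ‖‖∑ i : Fin n, ψ (w i)‖ ^ 2‖ ≤ (L * n) ^ 2
      rw [norm_pow, norm_norm]
      exact pow_le_pow_left₀ (norm_nonneg _) (hSbd w) 2
    have hinner0 : ∀ w : Fin n → Y,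
        ∫ y, ‖∑ i : Fin (n+1), ψ ((Fin.cons y w : Fin (n+1) → Y) i)‖ ^ 2 ∂Q
          ≤ L ^ 2 + ‖∑ i : Fin n, ψ (w i)‖ ^ 2 := by
      intro w
      set S := ∑ i : Fin n, ψ (w i) with hS
      have hexp : ∀ y, ‖∑ i : Fin (n+1), ψ ((Fin.cons y w : Fin (n+1) → Y) i)‖ ^ 2
          = ‖ψ y‖ ^ 2 + 2 * (inner ℝ (ψ y) S : ℝ) + ‖S‖ ^ 2 := by
        intro y
        rw [hsum_cons]
        exact norm_add_sq_real _ _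
      rw [integral_congr_ae (ae_of_all _ hexp)]
      have hint1 : Integrable (fun y => ‖ψ y‖ ^ 2) Q := by
        apply integrable_of_bddAll (C := L ^ 2)
        case hf => exact (hψ.norm.pow 2).aestronglyMeasurable
        intro y
        show ‖‖ψ y‖ ^ 2‖ ≤ L ^ 2
        rw [norm_pow, norm_norm]
        exact pow_le_pow_left₀ (norm_nonneg _) (hbd y) 2
      have hint2 : Integrable (fun y => 2 * (inner ℝ (ψ y) S : ℝ)) Q := by
        apply integrable_of_bddAll (C := 2 * (L * ‖S‖))
        · exact ((hψ.inner stronglyMeasurable_const).const_mul 2).aestronglyMeasurable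
        · intro y
          rw [Real.norm_eq_abs, abs_mul, abs_two]
          apply mul_le_mul_of_nonneg_left _ (by norm_num)
          calc |(inner ℝ (ψ y) S : ℝ)| ≤ ‖ψ y‖ * ‖S‖ := abs_real_inner_le_norm _ _
            _ ≤ L * ‖S‖ := mul_le_mul_of_nonneg_right (hbd y) (norm_nonneg _)
      have hint12 : Integrable (fun y => ‖ψ y‖ ^ 2 + 2 * (inner ℝ (ψ y) S : ℝ)) Q := by
        exact hint1.add hint2
      rw [integral_add hint12 (integrable_const _), integral_add hint1 hint2,
        integral_const, probReal_univ, one_smul]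
      have hz : ∫ y, 2 * (inner ℝ (ψ y) S : ℝ) ∂Q = 0 := by
        rw [integral_const_mul]
        have : ∫ y, (inner ℝ (ψ y) S : ℝ) ∂Q = 0 := by
          have hcomm : ∀ y, (inner ℝ (ψ y) S : ℝ) = (inner ℝ S (ψ y) : ℝ) := fun y =>
            real_inner_comm _ _
          rw [integral_congr_ae (ae_of_all _ hcomm), integral_inner hψint S, hmean,
            inner_zero_right]
        rw [this, mul_zero]
      rw [hz, add_zero]
      have : ∫ y, ‖ψ y‖ ^ 2 ∂Q ≤ L ^ 2 := by
        calc ∫ y, ‖ψ y‖ ^ 2 ∂Q ≤ ∫ _y, L ^ 2 ∂Q := by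
              apply integral_mono hint1 (integrable_const _)
              intro y
              exact pow_le_pow_left₀ (norm_nonneg _) (hbd y) 2
          _ = L ^ 2 := by simp
      linarith
    calc ∫ w, ∫ y, ‖∑ i : Fin (n+1), ψ ((Fin.cons y w : Fin (n+1) → Y) i)‖ ^ 2 ∂Q ∂πn
        ≤ ∫ w, (L ^ 2 + ‖∑ i : Fin n, ψ (w i)‖ ^ 2) ∂πn := by
          apply integral_mono_of_nonneg
          · exact ae_of_all _ fun w => integral_nonneg fun y => by positivity
          · have := (integrable_const (L ^ 2)).add hSint2
            simpa using this
          · exact ae_of_all _ hinner0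
      _ = L ^ 2 + ∫ w, ‖∑ i : Fin n, ψ (w i)‖ ^ 2 ∂πn := by
          rw [integral_add (integrable_const _) hSint2,
            integral_const, probReal_univ, one_smul]
      _ ≤ L ^ 2 + L ^ 2 * n := by linarith [ih]
      _ = L ^ 2 * (n + 1 : ℕ) := by push_cast; ring



/-- Distribution-free bound on the biased empirical MMD under the null hypothesis
(two samples of equal size from the same distribution). -/
theorem biased_mmd_null_bound
    {X : Type*} [MeasurableSpace X] {H : Type*} [NormedAddCommGroup H]
    [InnerProductSpace ℝ H] [CompleteSpace H]
    (φ : X → H) (hφ : StronglyMeasurable φ)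
    (K : ℝ) (hK : 0 < K)
    (hbd : ∀ x y : X, 0 ≤ (inner ℝ (φ x) (φ y) : ℝ) ∧ (inner ℝ (φ x) (φ y) : ℝ) ≤ K)
    (P : Measure X) [IsProbabilityMeasure P]
    (N : ℕ) (hN : 1 ≤ N) (ε : ℝ) (hε : 0 < ε) :
    ((Measure.pi fun _ : Fin N => P).prod (Measure.pi fun _ : Fin N => P))
        {z : (Fin N → X) × (Fin N → X) |
          ‖(1 / (N : ℝ)) • (∑ i, φ (z.1 i)) - (1 / (N : ℝ)) • (∑ j, φ (z.2 j))‖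
            > Real.sqrt (2 * K / N) + ε}
      ≤ ENNReal.ofReal (Real.exp (-(ε ^ 2 * N) / (4 * K))) := by
  have hNpos : (0:ℝ) < N := by exact_mod_cast Nat.lt_of_lt_of_le Nat.zero_lt_one hN
  set Q : Measure (X × X) := P.prod P with hQ
  set ψ : X × X → H := fun y => φ y.1 - φ y.2 with hψdef
  have hψm : StronglyMeasurable ψ :=
    (hφ.comp_measurable measurable_fst).sub (hφ.comp_measurable measurable_snd)
  have hφnorm : ∀ x, ‖φ x‖ ^ 2 ≤ K := by
    intro x
    rw [← real_inner_self_eq_norm_sq]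
    exact (hbd x x).2
  have hφnorm' : ∀ x, ‖φ x‖ ≤ Real.sqrt K := by
    intro x
    rw [show K = Real.sqrt K ^ 2 from (Real.sq_sqrt hK.le).symm] at hφnorm
    exact abs_le_abs (hφnorm x) |> fun _ => by
      nlinarith [hφnorm x, Real.sqrt_nonneg K, norm_nonneg (φ x)]
  set L : ℝ := Real.sqrt (2 * K) with hL
  have hLpos : 0 < L := Real.sqrt_pos.2 (by linarith)
  have hLsq : L ^ 2 = 2 * K := Real.sq_sqrt (by linarith)
  have hψbd : ∀ y, ‖ψ y‖ ≤ L := by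
    intro y
    have h2 : ‖ψ y‖ ^ 2 ≤ 2 * K := by
      rw [hψdef]
      simp only
      rw [norm_sub_sq_real]
      have := (hbd y.1 y.2).1
      have := hφnorm y.1
      have := hφnorm y.2
      linarith
    nlinarith [norm_nonneg (ψ y), hLpos, hLsq]
  have hφint : Integrable φ P :=
    integrable_of_bddAll hφ.aestronglyMeasurable hφnorm'
  have hψmean : ∫ y, ψ y ∂Q = 0 := by
    have hint1 : Integrable (fun z : X × X => φ z.1) Q :=
      integrable_of_bddAll (hφ.comp_measurable measurable_fst).aestronglyMeasurable
        (fun z => hφnorm' z.1)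
    have hint2 : Integrable (fun z : X × X => φ z.2) Q :=
      integrable_of_bddAll (hφ.comp_measurable measurable_snd).aestronglyMeasurable
        (fun z => hφnorm' z.2)
    rw [hψdef]
    simp only
    rw [integral_sub hint1 hint2]
    have h1 : ∫ z : X × X, φ z.1 ∂Q = ∫ x, φ x ∂P := by
      rw [hQ, integral_prod _ hint1]
      simp
    have h2 : ∫ z : X × X, φ z.2 ∂Q = ∫ x, φ x ∂P := by
      rw [hQ, integral_prod _ hint2]
      simp
    rw [h1, h2, sub_self]
  set f : (Fin N → X × X) → ℝ := fun w => ‖(1 / (N : ℝ)) • ∑ i, ψ (w i)‖ with hfdef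
  have hSmeas : StronglyMeasurable (fun w : Fin N → X × X => ∑ i, ψ (w i)) := by
    apply Finset.stronglyMeasurable_fun_sum
    intro i _
    exact hψm.comp_measurable (measurable_pi_apply i)
  have hfm : Measurable f := ((hSmeas.const_smul _).norm).measurable
  have hfB : ∀ w, |f w| ≤ L := by
    intro w
    rw [hfdef]
    simp only
    rw [abs_of_nonneg (norm_nonneg _), norm_smul, Real.norm_eq_abs,
      abs_of_nonneg (by positivity : (0:ℝ) ≤ 1 / N)]
    calc 1 / (N:ℝ) * ‖∑ i, ψ (w i)‖ ≤ 1 / N * (N * L) := by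
          apply mul_le_mul_of_nonneg_left _ (by positivity)
          calc ‖∑ i : Fin N, ψ (w i)‖ ≤ ∑ i : Fin N, ‖ψ (w i)‖ := norm_sum_le _ _
            _ ≤ ∑ _i : Fin N, L := Finset.sum_le_sum fun i _ => hψbd _
            _ = N * L := by simp [mul_comm]
      _ = L := by field_simp
  set c : ℝ := 2 * L / N with hc
  have hcpos : 0 < c := by positivity
  have hfd : ∀ (w : Fin N → X × X) (i : Fin N) (v : X × X),
      f (Function.update w i v) - f w ≤ c := by
    intro w i v
    have hsum : ∑ j, ψ (Function.update w i v j) - ∑ j, ψ (w j) = ψ v - ψ (w i) := by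
      have h1 : ∀ j, ψ (Function.update w i v j)
          = Function.update (fun k => ψ (w k)) i (ψ v) j := fun j =>
        Function.apply_update (fun _ a => ψ a) w i v j
      rw [Finset.sum_congr rfl (fun j _ => h1 j), Finset.sum_update_of_mem (Finset.mem_univ i),
        ← Finset.sum_erase_add Finset.univ _ (Finset.mem_univ i)]
      simp [Finset.sdiff_singleton_eq_erase]
      abel
    rw [hfdef]
    simp only
    calc ‖(1 / (N:ℝ)) • ∑ j, ψ (Function.update w i v j)‖ - ‖(1 / (N:ℝ)) • ∑ j, ψ (w j)‖
        ≤ ‖(1 / (N:ℝ)) • ∑ j, ψ (Function.update w i v j) - (1 / (N:ℝ)) • ∑ j, ψ (w j)‖ :=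
          norm_sub_norm_le _ _
      _ = ‖(1 / (N:ℝ)) • (ψ v - ψ (w i))‖ := by rw [← smul_sub, hsum]
      _ = 1 / N * ‖ψ v - ψ (w i)‖ := by
          rw [norm_smul, Real.norm_eq_abs, abs_of_nonneg (by positivity : (0:ℝ) ≤ 1 / N)]
      _ ≤ 1 / N * (2 * L) := by
          apply mul_le_mul_of_nonneg_left _ (by positivity)
          calc ‖ψ v - ψ (w i)‖ ≤ ‖ψ v‖ + ‖ψ (w i)‖ := norm_sub_le _ _
            _ ≤ L + L := add_le_add (hψbd _) (hψbd _)
            _ = 2 * L := by ring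
      _ = c := by rw [hc]; ring
  set pp : Measure (Fin N → X × X) := Measure.pi fun _ => Q with hpp
  set m : ℝ := ∫ w, f w ∂pp with hm
  have hfint : Integrable f pp :=
    integrable_of_bddAll hfm.aestronglyMeasurable (fun w => by
      rw [Real.norm_eq_abs]; exact hfB w)
  have hf2int : Integrable (fun w => f w ^ 2) pp :=
    integrable_of_bddAll (hfm.pow_const 2).aestronglyMeasurable (C := L ^ 2) (fun w => by
      rw [Real.norm_eq_abs, abs_pow]
      exact pow_le_pow_left₀ (abs_nonneg _) (hfB w) 2)
  have hm0 : 0 ≤ m := by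
    rw [hm]
    exact integral_nonneg fun w => norm_nonneg _
  have hEf2 : ∫ w, f w ^ 2 ∂pp ≤ L ^ 2 / N := by
    have hps : ∀ w : Fin N → X × X, f w ^ 2 = (1 / (N:ℝ)) ^ 2 * ‖∑ i, ψ (w i)‖ ^ 2 := by
      intro w
      rw [hfdef]
      simp only
      rw [norm_smul, Real.norm_eq_abs, abs_of_nonneg (by positivity : (0:ℝ) ≤ 1 / N), mul_pow]
    rw [integral_congr_ae (ae_of_all _ hps), integral_const_mul]
    have h2nd := second_moment_sum Q hψm hLpos.le hψbd hψmean N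
    calc (1 / (N:ℝ)) ^ 2 * ∫ w, ‖∑ i, ψ (w i)‖ ^ 2 ∂pp
        ≤ (1 / (N:ℝ)) ^ 2 * (L ^ 2 * N) := mul_le_mul_of_nonneg_left h2nd (by positivity)
      _ = L ^ 2 / N := by field_simp
  have hmsq : m ^ 2 ≤ L ^ 2 / N := by
    have hvar : 0 ≤ ∫ w, (f w - m) ^ 2 ∂pp := integral_nonneg fun w => sq_nonneg _
    have hexpand : ∫ w, (f w - m) ^ 2 ∂pp = (∫ w, f w ^ 2 ∂pp) - m ^ 2 := by
      have hpt : ∀ w, (f w - m) ^ 2 = (f w ^ 2 - 2 * m * f w) + m ^ 2 := fun w => by ring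
      have hint3 : Integrable (fun a => f a ^ 2 - 2 * m * f a) pp := by
        have := hf2int.sub (hfint.const_mul (2 * m))
        exact this
      rw [integral_congr_ae (ae_of_all _ hpt),
        integral_add hint3 (integrable_const _),
        integral_sub hf2int (hfint.const_mul (2 * m)), integral_const_mul, integral_const,
        probReal_univ, one_smul, ← hm]
      ring
    rw [hexpand] at hvar
    linarith
  have hmle : m ≤ Real.sqrt (2 * K / N) := by
    rw [hLsq] at hmsq
    have h1 : m ^ 2 ≤ 2 * K / N := hmsq
    calc m = Real.sqrt (m ^ 2) := (Real.sqrt_sq hm0).symm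
      _ ≤ Real.sqrt (2 * K / N) := Real.sqrt_le_sqrt h1
  have hmL : |m| ≤ L := by
    rw [abs_of_nonneg hm0]
    calc m ≤ Real.sqrt (2 * K / N) := hmle
      _ ≤ Real.sqrt (2 * K) := Real.sqrt_le_sqrt (by
          have hN1 : (1:ℝ) ≤ N := by exact_mod_cast hN
          rw [div_le_iff₀ hNpos]
          nlinarith)
      _ = L := rfl
  -- Chernoff
  set t : ℝ := ε * N / (2 * K) with ht
  have htpos : 0 < t := by positivity
  have hmgf := mcdiarmid_mgf Q t c hcpos.le N f hfm L hfB hfd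
  rw [← hpp] at hmgf
  rw [← hm] at hmgf
  have hXint : Integrable (fun w => Real.exp (t * (f w - m))) pp := by
    apply integrable_of_bddAll (C := Real.exp (|t| * (L + L)))
    · exact (((hfm.sub measurable_const).const_mul t).exp).aestronglyMeasurable
    · intro w
      rw [Real.norm_eq_abs, abs_of_pos (Real.exp_pos _)]
      apply Real.exp_le_exp.2
      calc t * (f w - m) ≤ |t * (f w - m)| := le_abs_self _
        _ = |t| * |f w - m| := abs_mul _ _
        _ ≤ |t| * (L + L) := by
            apply mul_le_mul_of_nonneg_left _ (abs_nonneg t)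
            calc |f w - m| ≤ |f w| + |m| := abs_sub _ _
              _ ≤ L + L := add_le_add (hfB w) hmL
  have hcher := ProbabilityTheory.measure_ge_le_exp_mul_mgf (μ := pp)
    (X := fun w => f w - m) ε htpos.le hXint
  have hKne : K ≠ 0 := hK.ne'
  have hNne : (N:ℝ) ≠ 0 := hNpos.ne'
  have hc2 : c ^ 2 = 8 * K / (N:ℝ) ^ 2 := by
    rw [hc, div_pow, mul_pow, hLsq]
    ring
  have hnum : Real.exp (-t * ε) * Real.exp (t ^ 2 * c ^ 2 * N / 8)
      = Real.exp (-(ε ^ 2 * N) / (4 * K)) := by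
    rw [← Real.exp_add]
    congr 1
    rw [hc2, ht]
    field_simp
    ring
  -- transfer to the paired space
  set e2 := MeasurableEquiv.arrowProdEquivProdArrow X X (Fin N) with he2
  have hmp2 : MeasurePreserving e2 pp
      ((Measure.pi fun _ : Fin N => P).prod (Measure.pi fun _ : Fin N => P)) := by
    rw [hpp, hQ]
    exact measurePreserving_arrowProdEquivProdArrow X X (Fin N) (fun _ => P) (fun _ => P)
  have hval : Measurable (fun z : (Fin N → X) × (Fin N → X) =>
      ‖(1 / (N : ℝ)) • (∑ i, φ (z.1 i)) - (1 / (N : ℝ)) • (∑ j, φ (z.2 j))‖) := by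
    have h1 : StronglyMeasurable (fun z : (Fin N → X) × (Fin N → X) => ∑ i, φ (z.1 i)) :=
      Finset.stronglyMeasurable_fun_sum _ fun i _ =>
        hφ.comp_measurable ((measurable_pi_apply i).comp measurable_fst)
    have h2 : StronglyMeasurable (fun z : (Fin N → X) × (Fin N → X) => ∑ j, φ (z.2 j)) :=
      Finset.stronglyMeasurable_fun_sum _ fun j _ =>
        hφ.comp_measurable ((measurable_pi_apply j).comp measurable_snd)
    exact (((h1.const_smul _).sub (h2.const_smul _)).norm).measurable
  set S := {z : (Fin N → X) × (Fin N → X) |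
      ‖(1 / (N : ℝ)) • (∑ i, φ (z.1 i)) - (1 / (N : ℝ)) • (∑ j, φ (z.2 j))‖
        > Real.sqrt (2 * K / N) + ε} with hS
  have hSmeas : MeasurableSet S := by
    have : S = (fun z : (Fin N → X) × (Fin N → X) =>
        ‖(1 / (N : ℝ)) • (∑ i, φ (z.1 i)) - (1 / (N : ℝ)) • (∑ j, φ (z.2 j))‖) ⁻¹'
        (Set.Ioi (Real.sqrt (2 * K / N) + ε)) := rfl
    rw [this]
    exact hval measurableSet_Ioi
  have hpre : e2 ⁻¹' S ⊆ {w | ε ≤ f w - m} := by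
    intro w hw
    simp only [hS, Set.mem_preimage, Set.mem_setOf_eq] at hw ⊢
    have he2w : e2 w = (fun i => (w i).1, fun i => (w i).2) := rfl
    rw [he2w] at hw
    have hfw : f w = ‖(1 / (N : ℝ)) • (∑ i, φ ((w i).1))
        - (1 / (N : ℝ)) • (∑ i, φ ((w i).2))‖ := by
      rw [hfdef]
      simp only
      rw [← smul_sub]
      congr 2
      rw [← Finset.sum_sub_distrib]
    have : Real.sqrt (2 * K / N) + ε < f w := by
      rw [hfw]
      exact hw
    linarith
  calc ((Measure.pi fun _ : Fin N => P).prod (Measure.pi fun _ : Fin N => P)) S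
      = pp (e2 ⁻¹' S) := (hmp2.measure_preimage hSmeas.nullMeasurableSet).symm
    _ ≤ pp {w | ε ≤ f w - m} := measure_mono hpre
    _ ≤ ENNReal.ofReal (Real.exp (-t * ε)
          * ProbabilityTheory.mgf (fun w => f w - m) pp t) := by
        rw [ENNReal.le_ofReal_iff_toReal_le (measure_ne_top _ _)
          (mul_nonneg (Real.exp_pos _).le ProbabilityTheory.mgf_nonneg)]
        exact hcher
    _ ≤ ENNReal.ofReal (Real.exp (-(ε ^ 2 * N) / (4 * K))) := by
        apply ENNReal.ofReal_le_ofReal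
        rw [← hnum]
        apply mul_le_mul_of_nonneg_left _ (Real.exp_pos _).le
        exact hmgf
end

section
/- Let X be a measurable space and k : X × X → ℝ a bounded measurable kernel. For probability measures P, Q, Z on X, let Σ^{P,Q}(x) = s_k(P,x) − s_k(Q,x) be the similarity score, where s_k(μ, x) = ∫∫ k dμ dμ − 2 ∫ k(u,x) dμ(u). Then the expectation of the similarity score under Z equals the difference of squared maximum mean discrepancies: ∫ Σ^{P,Q}(x) dZ(x) = D_k(P,Z)² − D_k(Q,Z)², where D_k(μ,ν)² = ∫∫ k dμ dμ − 2 ∫∫ k dμ dν + ∫∫ k dν dν. -/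
open MeasureTheory

lemma aux_integrable_swap {X : Type*} [MeasurableSpace X] (k : X → X → ℝ)
    (hk : Measurable (Function.uncurry k)) (C : ℝ) (hC : ∀ x y, |k x y| ≤ C)
    (μ ν : Measure X) [IsProbabilityMeasure μ] [IsProbabilityMeasure ν] :
    Integrable (Function.uncurry fun x u => k u x) (μ.prod ν) := by
  have hm : Measurable (Function.uncurry fun (x u : X) => k u x) :=
    hk.comp measurable_swap
  refine (integrable_const C).mono' hm.aestronglyMeasurable ?_
  filter_upwards with p
  simpa [Real.norm_eq_abs, Function.uncurry] using hC p.2 p.1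

lemma aux_int_meas {X : Type*} [MeasurableSpace X] (k : X → X → ℝ)
    (hk : Measurable (Function.uncurry k)) (C : ℝ) (hC : ∀ x y, |k x y| ≤ C)
    (μ ν : Measure X) [IsProbabilityMeasure μ] [IsProbabilityMeasure ν] :
    Integrable (fun x => ∫ u, k u x ∂μ) ν :=
  (aux_integrable_swap k hk C hC ν μ).integral_prod_left

lemma aux_swap {X : Type*} [MeasurableSpace X] (k : X → X → ℝ)
    (hk : Measurable (Function.uncurry k)) (C : ℝ) (hC : ∀ x y, |k x y| ≤ C)
    (μ ν : Measure X) [IsProbabilityMeasure μ] [IsProbabilityMeasure ν] :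
    (∫ x, ∫ u, k u x ∂μ ∂ν) = ∫ u, ∫ v, k u v ∂ν ∂μ :=
  integral_integral_swap (aux_integrable_swap k hk C hC ν μ)

/-- The expectation of the similarity score under `Z` equals the difference of
squared maximum mean discrepancies. -/
theorem expected_similarity_score_eq_sq_mmd_diff
    {X : Type*} [MeasurableSpace X] (k : X → X → ℝ)
    (hk : Measurable (Function.uncurry k)) (C : ℝ) (hC : ∀ x y, |k x y| ≤ C)
    (P Q Z : Measure X) [IsProbabilityMeasure P] [IsProbabilityMeasure Q]
    [IsProbabilityMeasure Z] :
    (∫ x, (((∫ u, (∫ v, k u v ∂P) ∂P) - 2 * ∫ u, k u x ∂P)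
            - ((∫ u, (∫ v, k u v ∂Q) ∂Q) - 2 * ∫ u, k u x ∂Q)) ∂Z)
      = ((∫ u, (∫ v, k u v ∂P) ∂P) - 2 * (∫ u, (∫ v, k u v ∂Z) ∂P)
            + ∫ u, (∫ v, k u v ∂Z) ∂Z)
        - ((∫ u, (∫ v, k u v ∂Q) ∂Q) - 2 * (∫ u, (∫ v, k u v ∂Z) ∂Q)
            + ∫ u, (∫ v, k u v ∂Z) ∂Z) := by
  have hP := aux_int_meas k hk C hC P Z
  have hQ := aux_int_meas k hk C hC Q Z
  have hsP := aux_swap k hk C hC P Z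
  have hsQ := aux_swap k hk C hC Q Z
  have h1 : Integrable (fun x => (∫ u, (∫ v, k u v ∂P) ∂P) - 2 * ∫ u, k u x ∂P) Z :=
    (integrable_const _).sub (hP.const_mul 2)
  have h2 : Integrable (fun x => (∫ u, (∫ v, k u v ∂Q) ∂Q) - 2 * ∫ u, k u x ∂Q) Z :=
    (integrable_const _).sub (hQ.const_mul 2)
  rw [integral_sub h1 h2,
    integral_sub (integrable_const _) (hP.const_mul 2),
    integral_sub (integrable_const _) (hQ.const_mul 2),
    integral_const, integral_const,
    MeasureTheory.integral_const_mul, MeasureTheory.integral_const_mul, hsP, hsQ]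
  simp
end

section
/- Let X be a measurable space, H a real Hilbert space, and φ : X → H a strongly measurable feature map whose kernel k(x,y) = ⟪φ(x), φ(y)⟫_H is bounded. Let P and Q be probability measures on X and let Σ^{P,Q}(x) = s_k(P,x) − s_k(Q,x), where s_k(μ, x) = ∫∫ k dμ dμ − 2 ∫ k(u,x) dμ(u). Then the expectation of the similarity score under P is nonpositive: ∫ Σ^{P,Q}(x) dP(x) ≤ 0. -/
open MeasureTheory

/-- The expectation of the similarity score under `P` is nonpositive. -/
theorem expected_similarity_score_nonpos_under_P
    {X : Type*} [MeasurableSpace X] {H : Type*} [NormedAddCommGroup H]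
    [InnerProductSpace ℝ H] [CompleteSpace H]
    (φ : X → H) (hφ : StronglyMeasurable φ)
    (C : ℝ) (hC : ∀ x y : X, |(inner ℝ (φ x) (φ y) : ℝ)| ≤ C)
    (P Q : Measure X) [IsProbabilityMeasure P] [IsProbabilityMeasure Q] :
    (∫ x, (((∫ u, (∫ v, (inner ℝ (φ u) (φ v) : ℝ) ∂P) ∂P)
              - 2 * ∫ u, (inner ℝ (φ u) (φ x) : ℝ) ∂P)
            - ((∫ u, (∫ v, (inner ℝ (φ u) (φ v) : ℝ) ∂Q) ∂Q)
              - 2 * ∫ u, (inner ℝ (φ u) (φ x) : ℝ) ∂Q)) ∂P) ≤ 0 := by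
  have hbound : ∀ x : X, ‖φ x‖ ≤ Real.sqrt C := by
    intro x
    have h := hC x x
    rw [real_inner_self_eq_norm_sq] at h
    have h1 : ‖φ x‖ ^ 2 ≤ C := (abs_le.1 h).2
    calc ‖φ x‖ = Real.sqrt (‖φ x‖ ^ 2) := by
          rw [Real.sqrt_sq (norm_nonneg _)]
      _ ≤ Real.sqrt C := Real.sqrt_le_sqrt h1
  have hint : ∀ (μ : Measure X) [IsProbabilityMeasure μ], Integrable φ μ := by
    intro μ _
    exact (integrable_const (Real.sqrt C)).mono' hφ.aestronglyMeasurable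
      (Filter.Eventually.of_forall hbound)
  set mP := ∫ u, φ u ∂P with hmP
  set mQ := ∫ u, φ u ∂Q with hmQ
  have h1 : ∀ (μ : Measure X) [IsProbabilityMeasure μ] (x : X),
      ∫ u, (inner ℝ (φ u) (φ x) : ℝ) ∂μ = (inner ℝ (∫ u, φ u ∂μ) (φ x) : ℝ) := by
    intro μ _ x
    calc ∫ u, (inner ℝ (φ u) (φ x) : ℝ) ∂μ
        = ∫ u, (inner ℝ (φ x) (φ u) : ℝ) ∂μ :=
          integral_congr_ae (Filter.Eventually.of_forall fun u => real_inner_comm _ _)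
      _ = (inner ℝ (φ x) (∫ u, φ u ∂μ) : ℝ) := integral_inner (hint μ) _
      _ = _ := real_inner_comm _ _
  have h2 : ∀ (μ : Measure X) [IsProbabilityMeasure μ],
      ∫ u, (∫ v, (inner ℝ (φ u) (φ v) : ℝ) ∂μ) ∂μ
        = (inner ℝ (∫ u, φ u ∂μ) (∫ u, φ u ∂μ) : ℝ) := by
    intro μ _
    calc ∫ u, (∫ v, (inner ℝ (φ u) (φ v) : ℝ) ∂μ) ∂μ
        = ∫ u, (inner ℝ (∫ v, φ v ∂μ) (φ u) : ℝ) ∂μ := by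
          refine integral_congr_ae (Filter.Eventually.of_forall fun u => ?_)
          show ∫ v, (inner ℝ (φ u) (φ v) : ℝ) ∂μ = (inner ℝ (∫ v, φ v ∂μ) (φ u) : ℝ)
          rw [integral_inner (hint μ) (φ u)]
          exact real_inner_comm _ _
      _ = (inner ℝ (∫ v, φ v ∂μ) (∫ u, φ u ∂μ) : ℝ) := integral_inner (hint μ) _
  have hintP : ∀ c : H, Integrable (fun x => (inner ℝ c (φ x) : ℝ)) P := by
    intro c
    exact ((innerSL ℝ c).integrable_comp (hint P))
  simp_rw [h1 P, h1 Q, h2 P, h2 Q]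
  rw [← hmP, ← hmQ]
  have hiP := (hintP mP).const_mul 2
  have hiQ := (hintP mQ).const_mul 2
  have hmPc : ∫ x, (inner ℝ mP (φ x) : ℝ) ∂P = (inner ℝ mP mP : ℝ) := integral_inner (hint P) _
  have hmQc : ∫ x, (inner ℝ mQ (φ x) : ℝ) ∂P = (inner ℝ mQ mP : ℝ) := integral_inner (hint P) _
  have hA : Integrable (fun x => (inner ℝ mP mP : ℝ) - 2 * (inner ℝ mP (φ x) : ℝ)) P :=
    (integrable_const _).sub hiP
  have hB : Integrable (fun x => (inner ℝ mQ mQ : ℝ) - 2 * (inner ℝ mQ (φ x) : ℝ)) P :=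
    (integrable_const _).sub hiQ
  rw [integral_sub hA hB, integral_sub (integrable_const _) hiP,
    integral_sub (integrable_const _) hiQ,
    integral_const_mul, integral_const_mul, hmPc, hmQc, integral_const, integral_const]
  simp only [measure_univ, probReal_univ, ENNReal.toReal_one, one_smul, smul_eq_mul]
  have hexp : (inner ℝ (mP - mQ) (mP - mQ) : ℝ)
      = (inner ℝ mP mP : ℝ) - 2 * (inner ℝ mQ mP : ℝ) + (inner ℝ mQ mQ : ℝ) := by
    rw [inner_sub_sub_self]
    rw [real_inner_comm mQ mP]
    ring
  have hnn : (0 : ℝ) ≤ (inner ℝ (mP - mQ) (mP - mQ) : ℝ) := real_inner_self_nonneg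
  nlinarith [hnn, hexp]
end

section
/- Let X be a measurable space, H a real Hilbert space, and φ : X → H a strongly measurable feature map whose kernel k(x,y) = ⟪φ(x), φ(y)⟫_H is bounded. Let P and Q be probability measures on X and let Σ^{P,Q}(x) = s_k(P,x) − s_k(Q,x), where s_k(μ, x) = ∫∫ k dμ dμ − 2 ∫ k(u,x) dμ(u). Then the expectation of the similarity score under Q is nonnegative: ∫ Σ^{P,Q}(x) dQ(x) ≥ 0. -/
open MeasureTheory

/-- The expectation of the similarity score under `Q` is nonnegative. -/
theorem expected_similarity_score_nonneg_under_Q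
    {X : Type*} [MeasurableSpace X] {H : Type*} [NormedAddCommGroup H]
    [InnerProductSpace ℝ H] [CompleteSpace H]
    (φ : X → H) (hφ : StronglyMeasurable φ)
    (C : ℝ) (hC : ∀ x y : X, |(inner ℝ (φ x) (φ y) : ℝ)| ≤ C)
    (P Q : Measure X) [IsProbabilityMeasure P] [IsProbabilityMeasure Q] :
    0 ≤ ∫ x, (((∫ u, (∫ v, (inner ℝ (φ u) (φ v) : ℝ) ∂P) ∂P)
              - 2 * ∫ u, (inner ℝ (φ u) (φ x) : ℝ) ∂P)
            - ((∫ u, (∫ v, (inner ℝ (φ u) (φ v) : ℝ) ∂Q) ∂Q)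
              - 2 * ∫ u, (inner ℝ (φ u) (φ x) : ℝ) ∂Q)) ∂Q := by
  -- φ is bounded
  have hb : ∀ x, ‖φ x‖ ≤ Real.sqrt C := by
    intro x
    have h := hC x x
    rw [real_inner_self_eq_norm_sq] at h
    have : ‖φ x‖ ^ 2 ≤ C := le_trans (le_abs_self _) h
    nlinarith [Real.sq_sqrt (le_trans (sq_nonneg ‖φ x‖) this),
      Real.sqrt_nonneg C, norm_nonneg (φ x)]
  have hintP : Integrable φ P :=
    Integrable.mono' (integrable_const (Real.sqrt C)) hφ.aestronglyMeasurable
      (ae_of_all _ hb)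
  have hintQ : Integrable φ Q :=
    Integrable.mono' (integrable_const (Real.sqrt C)) hφ.aestronglyMeasurable
      (ae_of_all _ hb)
  set mP := ∫ u, φ u ∂P with hmP
  set mQ := ∫ u, φ u ∂Q with hmQ
  -- inner ℝ integral identities
  have hin : ∀ (μ : Measure X), Integrable φ μ → ∀ c : H,
      ∫ u, (inner ℝ (φ u) c : ℝ) ∂μ = (inner ℝ (∫ u, φ u ∂μ) c : ℝ) := by
    intro μ hμ c
    have h : (fun u => (inner ℝ (φ u) c : ℝ)) = fun u => (inner ℝ c (φ u) : ℝ) :=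
      funext fun u => real_inner_comm _ _
    rw [h, integral_inner hμ, real_inner_comm]
  have e1 : ∫ u, (∫ v, (inner ℝ (φ u) (φ v) : ℝ) ∂P) ∂P = (inner ℝ mP mP : ℝ) := by
    have h : ∀ u, ∫ v, (inner ℝ (φ u) (φ v) : ℝ) ∂P = (inner ℝ mP (φ u) : ℝ) := by
      intro u
      rw [integral_inner hintP, real_inner_comm]
    simp_rw [h]
    rw [integral_inner hintP]
  have e2 : ∫ u, (∫ v, (inner ℝ (φ u) (φ v) : ℝ) ∂Q) ∂Q = (inner ℝ mQ mQ : ℝ) := by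
    have h : ∀ u, ∫ v, (inner ℝ (φ u) (φ v) : ℝ) ∂Q = (inner ℝ mQ (φ u) : ℝ) := by
      intro u
      rw [integral_inner hintQ, real_inner_comm]
    simp_rw [h]
    rw [integral_inner hintQ]
  have e3 : ∀ x, ∫ u, (inner ℝ (φ u) (φ x) : ℝ) ∂P = (inner ℝ mP (φ x) : ℝ) :=
    fun x => hin P hintP (φ x)
  have e4 : ∀ x, ∫ u, (inner ℝ (φ u) (φ x) : ℝ) ∂Q = (inner ℝ mQ (φ x) : ℝ) :=
    fun x => hin Q hintQ (φ x)
  simp_rw [e1, e2, e3, e4]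
  -- rewrite integrand
  have hfun : ∀ x : X,
      (((inner ℝ mP mP : ℝ) - 2 * (inner ℝ mP (φ x) : ℝ))
        - ((inner ℝ mQ mQ : ℝ) - 2 * (inner ℝ mQ (φ x) : ℝ)))
      = ((inner ℝ mP mP : ℝ) - (inner ℝ mQ mQ : ℝ))
        - 2 * (inner ℝ (mP - mQ) (φ x) : ℝ) := by
    intro x
    rw [inner_sub_left]
    ring
  simp_rw [hfun]
  have hintinner : Integrable (fun x => (inner ℝ (mP - mQ) (φ x) : ℝ)) Q :=
    hintQ.const_inner _
  rw [integral_sub (integrable_const _) (hintinner.const_mul 2),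
    integral_const, integral_const_mul, integral_inner hintQ (mP - mQ)]
  rw [← hmQ]
  have h0 : (0:ℝ) ≤ inner ℝ (mP - mQ) (mP - mQ) := real_inner_self_nonneg
  simp only [inner_sub_left, inner_sub_right, real_inner_comm mP mQ] at h0 ⊢
  simp only [measure_univ, probReal_univ, ENNReal.toReal_one, one_smul]
  linarith
end

section
/- Let X be a measurable space, H a real Hilbert space, and φ : X → H a strongly measurable feature map whose kernel k(x,y) = ⟪φ(x), φ(y)⟫_H is bounded, and suppose the mean embedding P ↦ ∫ φ dP is injective on probability measures on X. Then the kernel scoring rule is strictly proper: for all probability measures P ≠ Q on X, s_k(P, P) < s_k(Q, P), where s_k(μ, ν) = ∫ s_k(μ, y) dν(y) and s_k(μ, y) = ∫∫ k dμ dμ − 2 ∫ k(u, y) dμ(u). -/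
open MeasureTheory

/-- If the (bounded) kernel arising from a strongly measurable feature map is
characteristic (its mean embedding is injective on probability measures), then the
kernel scoring rule is strictly proper. -/
theorem kernel_scoring_rule_strictly_proper
    {X : Type*} [MeasurableSpace X] {H : Type*} [NormedAddCommGroup H]
    [InnerProductSpace ℝ H] [CompleteSpace H]
    (φ : X → H) (hφ : StronglyMeasurable φ)
    (C : ℝ) (hC : ∀ x y : X, |(inner ℝ (φ x) (φ y) : ℝ)| ≤ C)
    (hinj : ∀ μ ν : Measure X, IsProbabilityMeasure μ → IsProbabilityMeasure ν →
      (∫ x, φ x ∂μ) = (∫ x, φ x ∂ν) → μ = ν)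
    (P Q : Measure X) [IsProbabilityMeasure P] [IsProbabilityMeasure Q]
    (hPQ : P ≠ Q) :
    (∫ y, ((∫ u, (∫ v, (inner ℝ (φ u) (φ v) : ℝ) ∂P) ∂P)
            - 2 * ∫ u, (inner ℝ (φ u) (φ y) : ℝ) ∂P) ∂P)
      < ∫ y, ((∫ u, (∫ v, (inner ℝ (φ u) (φ v) : ℝ) ∂Q) ∂Q)
            - 2 * ∫ u, (inner ℝ (φ u) (φ y) : ℝ) ∂Q) ∂P := by
  have hb : ∀ x, ‖φ x‖ ≤ Real.sqrt C := by
    intro x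
    rw [show ‖φ x‖ = Real.sqrt (‖φ x‖ ^ 2) from (Real.sqrt_sq (norm_nonneg _)).symm]
    apply Real.sqrt_le_sqrt
    rw [← real_inner_self_eq_norm_sq]
    exact (le_abs_self _).trans (hC x x)
  have intφ : ∀ (μ : Measure X), IsProbabilityMeasure μ → Integrable φ μ := by
    intro μ _
    exact (integrable_const (Real.sqrt C)).mono' hφ.aestronglyMeasurable
      (Filter.Eventually.of_forall hb)
  have intP : Integrable φ P := intφ P inferInstance
  have intQ : Integrable φ Q := intφ Q inferInstance
  set mP : H := ∫ x, φ x ∂P with hmP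
  set mQ : H := ∫ x, φ x ∂Q with hmQ
  have key : ∀ (μ : Measure X), Integrable φ μ → ∀ y : X,
      (∫ u, (inner ℝ (φ u) (φ y) : ℝ) ∂μ) = (inner ℝ (∫ x, φ x ∂μ) (φ y) : ℝ) := by
    intro μ hμ y
    calc ∫ u, (inner ℝ (φ u) (φ y) : ℝ) ∂μ
        = ∫ u, (inner ℝ (φ y) (φ u) : ℝ) ∂μ := by simp_rw [real_inner_comm]
      _ = (inner ℝ (φ y) (∫ x, φ x ∂μ) : ℝ) := integral_inner hμ _
      _ = _ := real_inner_comm _ _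
  have dbl : ∀ (μ : Measure X), Integrable φ μ →
      (∫ u, (∫ v, (inner ℝ (φ u) (φ v) : ℝ) ∂μ) ∂μ)
        = (inner ℝ (∫ x, φ x ∂μ) (∫ x, φ x ∂μ) : ℝ) := by
    intro μ hμ
    calc ∫ u, (∫ v, (inner ℝ (φ u) (φ v) : ℝ) ∂μ) ∂μ
        = ∫ u, (inner ℝ (φ u) (∫ x, φ x ∂μ) : ℝ) ∂μ := by
          congr 1; funext u; exact integral_inner hμ _
      _ = ∫ u, (inner ℝ ((∫ x, φ x ∂μ)) (φ u) : ℝ) ∂μ := by simp_rw [real_inner_comm]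
      _ = _ := integral_inner hμ _
  have intinner : ∀ (m : H), Integrable (fun y => (inner ℝ m (φ y) : ℝ)) P := by
    intro m
    exact (innerSL ℝ m).integrable_comp intP
  have side : ∀ (m : H) (A : ℝ),
      (∫ y, (A - 2 * (inner ℝ m (φ y) : ℝ)) ∂P) = A - 2 * (inner ℝ m mP : ℝ) := by
    intro m A
    rw [integral_sub (integrable_const A) ((intinner m).const_mul 2),
      integral_const, integral_const_mul, integral_inner intP]
    simp
    rfl
  have lhs : (∫ y, ((∫ u, (∫ v, (inner ℝ (φ u) (φ v) : ℝ) ∂P) ∂P)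
            - 2 * ∫ u, (inner ℝ (φ u) (φ y) : ℝ) ∂P) ∂P)
      = (inner ℝ mP mP : ℝ) - 2 * (inner ℝ mP mP : ℝ) := by
    rw [← side mP (inner ℝ mP mP)]
    congr 1; funext y
    rw [dbl P intP, key P intP y]
  have rhs : (∫ y, ((∫ u, (∫ v, (inner ℝ (φ u) (φ v) : ℝ) ∂Q) ∂Q)
            - 2 * ∫ u, (inner ℝ (φ u) (φ y) : ℝ) ∂Q) ∂P)
      = (inner ℝ mQ mQ : ℝ) - 2 * (inner ℝ mQ mP : ℝ) := by
    rw [← side mQ (inner ℝ mQ mQ)]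
    congr 1; funext y
    rw [dbl Q intQ, key Q intQ y]
  rw [lhs, rhs]
  have hne : mQ - mP ≠ 0 := by
    intro h
    exact hPQ (hinj P Q inferInstance inferInstance (sub_eq_zero.mp h).symm)
  have hpos : (0 : ℝ) < inner ℝ (mQ - mP) (mQ - mP) := by
    rw [real_inner_self_eq_norm_sq]
    exact pow_pos (norm_pos_iff.mpr hne) 2
  rw [inner_sub_left, inner_sub_right, inner_sub_right] at hpos
  have hc : (inner ℝ mP mQ : ℝ) = inner ℝ mQ mP := real_inner_comm _ _
  linarith
end

section
/- Let X be a measurable space, k : X × X → ℝ a bounded measurable kernel, P a probability measure on X, y ∈ X, and N ≥ 2. Then the empirical kernel-score estimator is unbiased: the expectation with respect to P^{⊗N} over i.i.d. samples (x₁,…,x_N) of (1/(N(N−1))) Σ_{i≠j} k(x_i, x_j) − (2/N) Σ_{i=1}^N k(x_i, y) equals the kernel score s_k(P, y) = ∫∫ k(u,u′) dP(u) dP(u′) − 2 ∫ k(u,y) dP(u). -/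
open MeasureTheory

lemma pi_map_eval_aux {X : Type*} [MeasurableSpace X] (P : Measure X) [IsProbabilityMeasure P]
    (N : ℕ) (i : Fin N) :
    (Measure.pi fun _ : Fin N => P).map (Function.eval i) = P := by
  ext s hs
  rw [Measure.map_apply (measurable_pi_apply i) hs]
  have : Function.eval i ⁻¹' s =
      Set.pi Set.univ (Function.update (fun _ : Fin N => (Set.univ : Set X)) i s) := by
    ext xs
    simp only [Set.mem_preimage, Set.mem_pi, Set.mem_univ, true_implies]
    constructor
    · intro h l
      by_cases hl : l = i
      · subst hl; simpa using h
      · simp [Function.update_apply, hl]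
    · intro h
      have := h i
      simpa using this
  rw [this, Measure.pi_pi]
  rw [Finset.prod_eq_single i (fun l _ hl => by simp [Function.update_apply, hl])
    (fun h => absurd (Finset.mem_univ i) h)]
  simp

lemma pi_map_pair_aux {X : Type*} [MeasurableSpace X] (P : Measure X) [IsProbabilityMeasure P]
    (N : ℕ) (i j : Fin N) (hij : i ≠ j) :
    (Measure.pi fun _ : Fin N => P).map (fun xs => (xs i, xs j)) = P.prod P := by
  refine (Measure.prod_eq fun s t hs ht => ?_).symm
  rw [Measure.map_apply (by exact (measurable_pi_apply i).prodMk (measurable_pi_apply j))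
    (hs.prod ht)]
  have : (fun xs : Fin N → X => (xs i, xs j)) ⁻¹' (s ×ˢ t) =
      Set.pi Set.univ (Function.update (Function.update
        (fun _ : Fin N => (Set.univ : Set X)) j t) i s) := by
    ext xs
    simp only [Set.mem_preimage, Set.mem_prod, Set.mem_pi, Set.mem_univ, true_implies]
    constructor
    · intro h l
      by_cases hl : l = i
      · subst hl; simpa using h.1
      · by_cases hl' : l = j
        · subst hl'; simpa [Function.update_apply, hl] using h.2
        · simp [Function.update_apply, hl, hl']
    · intro h
      refine ⟨by simpa using h i, ?_⟩
      have := h j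
      simpa [Function.update_apply, hij.symm] using this
  rw [this, Measure.pi_pi]
  rw [Finset.prod_eq_mul_of_mem i j (Finset.mem_univ i) (Finset.mem_univ j) hij
    (fun l _ hl => by simp [Function.update_apply, hl.1, hl.2])]
  simp [Function.update_apply, hij.symm]

lemma integrable_of_bdd_aux {α : Type*} [MeasurableSpace α] (μ : Measure α) [IsFiniteMeasure μ]
    {f : α → ℝ} (hf : Measurable f) {C : ℝ} (h : ∀ a, |f a| ≤ C) : Integrable f μ :=
  (integrable_const C).mono' hf.aestronglyMeasurable
    (Filter.Eventually.of_forall fun a => by simpa [Real.norm_eq_abs] using h a)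

/-- The empirical kernel-score estimator is unbiased for the kernel score. -/
theorem empirical_kernel_score_unbiased
    {X : Type*} [MeasurableSpace X] (k : X → X → ℝ)
    (hk : Measurable (Function.uncurry k)) (C : ℝ) (hC : ∀ x y, |k x y| ≤ C)
    (P : Measure X) [IsProbabilityMeasure P] (y : X)
    (N : ℕ) (hN : 2 ≤ N) :
    (∫ xs : Fin N → X,
        ((1 / ((N : ℝ) * ((N : ℝ) - 1))) *
            ∑ i : Fin N, ∑ j : Fin N, (if i ≠ j then k (xs i) (xs j) else 0)
          - (2 / (N : ℝ)) * ∑ i : Fin N, k (xs i) y)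
        ∂(Measure.pi fun _ : Fin N => P))
      = (∫ u, (∫ v, k u v ∂P) ∂P) - 2 * ∫ u, k u y ∂P := by
  set μ := Measure.pi fun _ : Fin N => P with hμ
  set I2 := ∫ u, (∫ v, k u v ∂P) ∂P with hI2
  set I1 := ∫ u, k u y ∂P with hI1
  -- measurability of single terms
  have hmeas_pair : ∀ i j : Fin N, Measurable (fun xs : Fin N → X => k (xs i) (xs j)) := by
    intro i j
    have h : (fun xs : Fin N → X => k (xs i) (xs j)) =
        (Function.uncurry k) ∘ (fun xs => (xs i, xs j)) := rfl
    rw [h]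
    exact hk.comp ((measurable_pi_apply i).prodMk (measurable_pi_apply j))
  have hky : Measurable (fun u : X => k u y) := by
    have h : (fun u : X => k u y) = (Function.uncurry k) ∘ (fun u => (u, y)) := rfl
    rw [h]
    exact hk.comp (measurable_id.prodMk measurable_const)
  have hmeas_y : ∀ i : Fin N, Measurable (fun xs : Fin N → X => k (xs i) y) :=
    fun i => hky.comp (measurable_pi_apply i)
  -- integrabilities
  have hint_pair : ∀ i j : Fin N,
      Integrable (fun xs : Fin N → X => if i ≠ j then k (xs i) (xs j) else 0) μ := by
    intro i j
    rcases eq_or_ne i j with h | h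
    · subst h
      simp only [ne_eq, not_true_eq_false, if_false]
      exact integrable_const 0
    · simp only [if_pos h]
      exact integrable_of_bdd_aux μ (hmeas_pair i j) (fun a => hC _ _)
  have hint_y : ∀ i : Fin N, Integrable (fun xs : Fin N → X => k (xs i) y) μ :=
    fun i => integrable_of_bdd_aux μ (hmeas_y i) (fun a => hC _ _)
  -- values of the single integrals
  have hval_y : ∀ i : Fin N, (∫ xs : Fin N → X, k (xs i) y ∂μ) = I1 := by
    intro i
    rw [hI1, ← pi_map_eval_aux P N i,
      integral_map (measurable_pi_apply i).aemeasurable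
        (by rw [pi_map_eval_aux P N i]; exact hky.aestronglyMeasurable)]
  have hval_pair : ∀ i j : Fin N, i ≠ j →
      (∫ xs : Fin N → X, k (xs i) (xs j) ∂μ) = I2 := by
    intro i j hij
    have h1 : (∫ xs : Fin N → X, k (xs i) (xs j) ∂μ)
        = ∫ p : X × X, k p.1 p.2 ∂(P.prod P) := by
      rw [← pi_map_pair_aux P N i j hij,
        integral_map (((measurable_pi_apply i).prodMk (measurable_pi_apply j)).aemeasurable)
          (by rw [pi_map_pair_aux P N i j hij]; exact hk.aestronglyMeasurable)]
    rw [h1, hI2]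
    exact integral_prod _ (integrable_of_bdd_aux (P.prod P) hk (fun a => hC _ _))
  -- split the integral
  have hintF : Integrable (fun xs : Fin N → X =>
      (1 / ((N : ℝ) * ((N : ℝ) - 1))) *
        ∑ i : Fin N, ∑ j : Fin N, (if i ≠ j then k (xs i) (xs j) else 0)) μ :=
    (integrable_finset_sum _ fun i _ =>
      integrable_finset_sum _ fun j _ => hint_pair i j).const_mul _
  have hintG : Integrable (fun xs : Fin N → X =>
      (2 / (N : ℝ)) * ∑ i : Fin N, k (xs i) y) μ :=
    (integrable_finset_sum _ fun i _ => hint_y i).const_mul _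
  rw [integral_sub hintF hintG, integral_const_mul, integral_const_mul,
    integral_finset_sum _ (fun i _ => integrable_finset_sum _ fun j _ => hint_pair i j),
    integral_finset_sum _ (fun i _ => hint_y i)]
  have hswap : ∀ i : Fin N,
      (∫ xs : Fin N → X, (∑ j : Fin N, if i ≠ j then k (xs i) (xs j) else 0) ∂μ)
      = ∑ j : Fin N, ∫ xs : Fin N → X, (if i ≠ j then k (xs i) (xs j) else 0) ∂μ :=
    fun i => integral_finset_sum _ (fun j _ => hint_pair i j)
  rw [Finset.sum_congr rfl fun i _ => hswap i]
  have hrow : ∀ i : Fin N, (∑ j : Fin N,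
      ∫ xs : Fin N → X, (if i ≠ j then k (xs i) (xs j) else 0) ∂μ)
      = ((N : ℝ) - 1) * I2 := by
    intro i
    have hterm : ∀ j : Fin N, (∫ xs : Fin N → X, (if i ≠ j then k (xs i) (xs j) else 0) ∂μ)
        = I2 - (if i = j then I2 else 0) := by
      intro j
      rcases eq_or_ne i j with h | h
      · subst h
        simp
      · simp only [if_pos h, if_neg h, sub_zero]
        exact hval_pair i j h
    rw [Finset.sum_congr rfl fun j _ => hterm j, Finset.sum_sub_distrib,
      Finset.sum_const, Finset.sum_ite_eq]
    simp [Finset.card_univ, nsmul_eq_mul, sub_mul]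
  rw [Finset.sum_congr rfl fun i _ => hrow i,
    Finset.sum_congr rfl fun i _ => hval_y i, Finset.sum_const, Finset.sum_const]
  simp only [Finset.card_univ, Fintype.card_fin, nsmul_eq_mul]
  have hN0 : (N : ℝ) ≠ 0 := by positivity
  have hN1 : (N : ℝ) - 1 ≠ 0 := by
    have h2 : (2 : ℝ) ≤ (N : ℝ) := by exact_mod_cast hN
    nlinarith
  field_simp
end
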